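/- arXiv:1805.06940 — 9 statements merged into one kernel-verified Lean document; each statement's English description precedes it below -/
import Mathlib

section
/- For every ω ∈ ℂ with ω ≠ 0 and every x ∈ ℝ, the Jost solution y1 admits the representation y1(x,ω) = (e^{iωd}/ω)·[ (s'(d,ω) − iω·s(d,ω))·c(x,ω) + (iω·c(d,ω) − c'(d,ω))·s(x,ω) ], where ' denotes the derivative with respect to x. -/
/-!
Any two solutions of `y'' = V y` have constant Wronskian. For solutions `c, s, y` the
identity `y · W(c,s) = W(y,s) · c + W(c,y) · s` holds pointwise by algebra, so with the
Wronskians evaluated where they are known — `W(c,s) = ω` at `0` from the initial data,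
and `W(y₁,s)`, `W(c,y₁)` at `d` from the Jost data — it gives the representation of `y₁`.
-/

def wronskian (f f' g g' : ℝ → ℂ) (t : ℝ) : ℂ := f t * g' t - f' t * g t

theorem mul_wronskian_eq (c c' s s' y y' : ℝ → ℂ) (t : ℝ) :
    y t * wronskian c c' s s' t =
      wronskian y y' s s' t * c t + wronskian c c' y y' t * s t := by
  simp only [wronskian]; ring

section SecondOrder

variable {V f f' g g' : ℝ → ℂ}

theorem hasDerivAt_wronskian {t : ℝ}
    (hf : HasDerivAt f (f' t) t) (hf' : HasDerivAt f' (V t * f t) t)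
    (hg : HasDerivAt g (g' t) t) (hg' : HasDerivAt g' (V t * g t) t) :
    HasDerivAt (wronskian f f' g g') 0 t :=
  ((hf.mul hg').sub (hf'.mul hg)).congr_deriv (by ring)

theorem wronskian_eq_of_hasDerivAt
    (hf : ∀ t, HasDerivAt f (f' t) t) (hf' : ∀ t, HasDerivAt f' (V t * f t) t)
    (hg : ∀ t, HasDerivAt g (g' t) t) (hg' : ∀ t, HasDerivAt g' (V t * g t) t)
    (a b : ℝ) : wronskian f f' g g' a = wronskian f f' g g' b :=
  have hW := fun t => hasDerivAt_wronskian (hf t) (hf' t) (hg t) (hg' t)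
  is_const_of_deriv_eq_zero (fun t => (hW t).differentiableAt) (fun t => (hW t).deriv) a b

theorem mul_wronskian_eq_of_hasDerivAt {c c' s s' y y' : ℝ → ℂ}
    (hc : ∀ t, HasDerivAt c (c' t) t) (hc' : ∀ t, HasDerivAt c' (V t * c t) t)
    (hs : ∀ t, HasDerivAt s (s' t) t) (hs' : ∀ t, HasDerivAt s' (V t * s t) t)
    (hy : ∀ t, HasDerivAt y (y' t) t) (hy' : ∀ t, HasDerivAt y' (V t * y t) t)
    (x a b : ℝ) :
    y x * wronskian c c' s s' b = wronskian y y' s s' a * c x + wronskian c c' y y' a * s x := by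
  rw [wronskian_eq_of_hasDerivAt hc hc' hs hs' b x,
    wronskian_eq_of_hasDerivAt hy hy' hs hs' a x,
    wronskian_eq_of_hasDerivAt hc hc' hy hy' a x]
  exact mul_wronskian_eq c c' s s' y y' x

end SecondOrder

theorem jost_y1_representation_general
    (d : ℝ) (q : ℝ → ℝ)
    (c c' s s' : ℂ → ℝ → ℂ)
    (hc : ∀ ω x, HasDerivAt (c ω) (c' ω x) x)
    (hc' : ∀ ω x, HasDerivAt (c' ω) (((q x : ℂ) - ω ^ 2) * c ω x) x)
    (hc0 : ∀ ω, c ω 0 = 1)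
    (hs : ∀ ω x, HasDerivAt (s ω) (s' ω x) x)
    (hs' : ∀ ω x, HasDerivAt (s' ω) (((q x : ℂ) - ω ^ 2) * s ω x) x)
    (hs0 : ∀ ω, s ω 0 = 0) (hs0' : ∀ ω, s' ω 0 = ω)
    (y1 y1' : ℂ → ℝ → ℂ)
    (hy1 : ∀ ω, ω ≠ 0 → ∀ x, HasDerivAt (y1 ω) (y1' ω x) x)
    (hy1' : ∀ ω, ω ≠ 0 → ∀ x, HasDerivAt (y1' ω) (((q x : ℂ) - ω ^ 2) * y1 ω x) x)
    (hy1d : ∀ ω, ω ≠ 0 → y1 ω d = Complex.exp (Complex.I * ω * d))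
    (hy1d' : ∀ ω, ω ≠ 0 → y1' ω d = Complex.I * ω * Complex.exp (Complex.I * ω * d)) :
    ∀ ω : ℂ, ω ≠ 0 → ∀ x : ℝ,
      y1 ω x = Complex.exp (Complex.I * ω * d) / ω *
        ((s' ω d - Complex.I * ω * s ω d) * c ω x +
          (Complex.I * ω * c ω d - c' ω d) * s ω x) := by
  intro ω hω x
  have expansion := mul_wronskian_eq_of_hasDerivAt (V := fun t => (q t : ℂ) - ω ^ 2)
    (hc ω) (hc' ω) (hs ω) (hs' ω) (hy1 ω hω) (hy1' ω hω) x d 0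
  simp only [wronskian, hc0, hs0, hs0', hy1d ω hω, hy1d' ω hω] at expansion
  field_simp
  linear_combination expansion

/-- For a compactly supported continuous potential `q` on `[0,d]`,
for every `ω ≠ 0` and every `x ∈ ℝ`, the Jost solution `y1` admits the representation
`y1(x,ω) = (e^{iωd}/ω)·[(s'(d,ω) − iω·s(d,ω))·c(x,ω) + (iω·c(d,ω) − c'(d,ω))·s(x,ω)]`. -/
theorem jost_y1_representation
    (d : ℝ) (hd : 0 < d) (q : ℝ → ℝ) (hq : Continuous q)
    (hqsupp : ∀ x : ℝ, x ∉ Set.Icc 0 d → q x = 0) (h : ℂ)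
    (c c' s s' : ℂ → ℝ → ℂ)
    (hc : ∀ ω x, HasDerivAt (c ω) (c' ω x) x)
    (hc' : ∀ ω x, HasDerivAt (c' ω) (((q x : ℂ) - ω ^ 2) * c ω x) x)
    (hc0 : ∀ ω, c ω 0 = 1) (hc0' : ∀ ω, c' ω 0 = h)
    (hs : ∀ ω x, HasDerivAt (s ω) (s' ω x) x)
    (hs' : ∀ ω x, HasDerivAt (s' ω) (((q x : ℂ) - ω ^ 2) * s ω x) x)
    (hs0 : ∀ ω, s ω 0 = 0) (hs0' : ∀ ω, s' ω 0 = ω)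
    (y1 y1' : ℂ → ℝ → ℂ)
    (hy1 : ∀ ω, ω ≠ 0 → ∀ x, HasDerivAt (y1 ω) (y1' ω x) x)
    (hy1' : ∀ ω, ω ≠ 0 → ∀ x, HasDerivAt (y1' ω) (((q x : ℂ) - ω ^ 2) * y1 ω x) x)
    (hy1d : ∀ ω, ω ≠ 0 → y1 ω d = Complex.exp (Complex.I * ω * d))
    (hy1d' : ∀ ω, ω ≠ 0 → y1' ω d = Complex.I * ω * Complex.exp (Complex.I * ω * d)) :
    ∀ ω : ℂ, ω ≠ 0 → ∀ x : ℝ,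
      y1 ω x = Complex.exp (Complex.I * ω * d) / ω *
        ((s' ω d - Complex.I * ω * s ω d) * c ω x +
          (Complex.I * ω * c ω d - c' ω d) * s ω x) :=
  jost_y1_representation_general d q c c' s s' hc hc' hc0 hs hs' hs0 hs0' y1 y1' hy1 hy1' hy1d hy1d'
end

section
/- For each fixed x ∈ ℝ, as ω → 0 in ℂ one has c(x,ω) = f0(x) + h·f1(x) + O(ω²) and c'(x,ω) = f0'(x) + h·f1'(x) + O(ω²), where ' denotes the derivative with respect to x. -/
open Complex Filter Topology Asymptotics

/-! The differences `u = c(·,ω) - (f0 + h f1)` and `v = c'(·,ω) - (f0' + h f1')` vanish at `0` and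
solve `u' = v`, `v' = (q - ω²) u - ω² (f0 + h f1)`. Grönwall's inequality for the first-order
system satisfied by `(u, v)`, whose forcing term is `O(ω²)` uniformly on `[0, x]`, gives the
bound `‖(u x, v x)‖ = O(ω²)`. -/

section Gronwall

variable {E : Type*} [NormedAddCommGroup E] [NormedSpace ℝ E]

theorem norm_le_gronwallBound_of_hasDerivAt_of_nonneg {f f' : ℝ → E} {δ K ε x : ℝ}
    (hf : ∀ t, HasDerivAt f (f' t) t) (h0 : ‖f 0‖ ≤ δ)
    (bound : ∀ t ∈ Set.uIcc 0 x, ‖f' t‖ ≤ K * ‖f t‖ + ε) (hx : 0 ≤ x) :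
    ‖f x‖ ≤ gronwallBound δ K ε x := by
  have hcont : Continuous f := continuous_iff_continuousAt.2 fun t => (hf t).continuousAt
  simpa using norm_le_gronwallBound_of_norm_deriv_right_le hcont.continuousOn
    (fun t _ => (hf t).hasDerivWithinAt) h0
    (fun t ht => bound t (Set.uIcc_of_le hx ▸ Set.Ico_subset_Icc_self ht)) x
    (Set.right_mem_Icc.2 hx)

theorem norm_le_gronwallBound_abs_of_hasDerivAt {f f' : ℝ → E} {δ K ε x : ℝ}
    (hf : ∀ t, HasDerivAt f (f' t) t) (h0 : ‖f 0‖ ≤ δ)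
    (bound : ∀ t ∈ Set.uIcc 0 x, ‖f' t‖ ≤ K * ‖f t‖ + ε) :
    ‖f x‖ ≤ gronwallBound δ K ε |x| := by
  rcases le_or_gt 0 x with hx | hx
  · rw [abs_of_nonneg hx]
    exact norm_le_gronwallBound_of_hasDerivAt_of_nonneg hf h0 bound hx
  · have hf_neg : ∀ t, HasDerivAt (fun s => f (-s)) (-f' (-t)) t := fun t => by
      simpa [Function.comp_def] using (hf (-t)).scomp t (hasDerivAt_neg t)
    have bound_neg : ∀ t ∈ Set.uIcc 0 (-x), ‖-f' (-t)‖ ≤ K * ‖f (-t)‖ + ε := fun t ht => by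
      rw [norm_neg]
      exact bound (-t) (by simpa [Set.image_neg_uIcc] using Set.mem_image_of_mem Neg.neg ht)
    simpa [abs_of_neg hx] using
      norm_le_gronwallBound_of_hasDerivAt_of_nonneg hf_neg (by simpa using h0) bound_neg
        (neg_nonneg.2 hx.le)

end Gronwall

theorem gronwallBound_δ0_mul (K r ε x : ℝ) :
    gronwallBound 0 K (r * ε) x = r * gronwallBound 0 K ε x := by
  unfold gronwallBound
  split_ifs <;> ring

theorem norm_prod_le_gronwallBound_of_hasDerivAt {𝕜 : Type*} [RCLike 𝕜] {u v a b : ℝ → 𝕜}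
    {δ K ε x : ℝ} (hu : ∀ t, HasDerivAt u (v t) t) (hv : ∀ t, HasDerivAt v (a t * u t + b t) t)
    (h0 : ‖(u 0, v 0)‖ ≤ δ) (hK : 1 ≤ K) (ha : ∀ t ∈ Set.uIcc 0 x, ‖a t‖ ≤ K)
    (hb : ∀ t ∈ Set.uIcc 0 x, ‖b t‖ ≤ ε) :
    ‖(u x, v x)‖ ≤ gronwallBound δ K ε |x| := by
  refine norm_le_gronwallBound_abs_of_hasDerivAt (fun t => (hu t).prodMk (hv t)) h0 ?_
  intro t ht
  have hε : 0 ≤ ε := (norm_nonneg _).trans (hb t ht)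
  have hu_le : ‖u t‖ ≤ ‖(u t, v t)‖ := norm_fst_le (u t, v t)
  have hv_le : ‖v t‖ ≤ ‖(u t, v t)‖ := norm_snd_le (u t, v t)
  refine max_le ?_ ?_
  · nlinarith [norm_nonneg (u t, v t)]
  · calc ‖a t * u t + b t‖ ≤ ‖a t‖ * ‖u t‖ + ‖b t‖ := (norm_add_le _ _).trans_eq (by rw [norm_mul])
      _ ≤ K * ‖(u t, v t)‖ + ε := by
        gcongr
        · exact ha t ht
        · exact hb t ht

theorem norm_prod_sub_le_of_hasDerivAt_schrodinger {𝕜 : Type*} [RCLike 𝕜]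
    {p y y' z z' : ℝ → 𝕜} {ω : 𝕜} {Q M x : ℝ}
    (hy : ∀ t, HasDerivAt y (y' t) t) (hy' : ∀ t, HasDerivAt y' ((p t - ω ^ 2) * y t) t)
    (hz : ∀ t, HasDerivAt z (z' t) t) (hz' : ∀ t, HasDerivAt z' (p t * z t) t)
    (h0 : y 0 = z 0) (h0' : y' 0 = z' 0) (hω : ‖ω‖ ≤ 1)
    (hp : ∀ t ∈ Set.uIcc 0 x, ‖p t‖ ≤ Q) (hzM : ∀ t ∈ Set.uIcc 0 x, ‖z t‖ ≤ M) :
    ‖(y x - z x, y' x - z' x)‖ ≤ ‖ω‖ ^ 2 * gronwallBound 0 (Q + 1) M |x| := by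
  have hQ : 0 ≤ Q := (norm_nonneg _).trans (hp 0 Set.left_mem_uIcc)
  have hω2 : ‖ω ^ 2‖ ≤ 1 := by rw [norm_pow]; exact pow_le_one₀ (norm_nonneg ω) hω
  rw [← gronwallBound_δ0_mul]
  refine norm_prod_le_gronwallBound_of_hasDerivAt (u := fun t => y t - z t)
    (v := fun t => y' t - z' t) (a := fun t => p t - ω ^ 2) (b := fun t => -(ω ^ 2 * z t))
    (fun t => (hy t).sub (hz t)) (fun t => ((hy' t).sub (hz' t)).congr_deriv (by ring))
    (by simp [h0, h0']) (by linarith)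
    (fun t ht => (norm_sub_le _ _).trans (by gcongr; exact hp t ht)) (fun t ht => ?_)
  rw [norm_neg, norm_mul, norm_pow]
  exact mul_le_mul_of_nonneg_left (hzM t ht) (by positivity)

theorem c_small_omega_asymptotics_general
    (q : ℝ → ℝ) (hq : Continuous q)
    (h : ℂ)
    (c c' : ℂ → ℝ → ℂ)
    (hc : ∀ ω x, HasDerivAt (c ω) (c' ω x) x)
    (hc' : ∀ ω x, HasDerivAt (c' ω) (((q x : ℂ) - ω ^ 2) * c ω x) x)
    (hc0 : ∀ ω, c ω 0 = 1) (hc0' : ∀ ω, c' ω 0 = h)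
    (f0 f0' f1 f1' : ℝ → ℂ)
    (hf0 : ∀ x, HasDerivAt f0 (f0' x) x)
    (hf0' : ∀ x, HasDerivAt f0' ((q x : ℂ) * f0 x) x)
    (hf00 : f0 0 = 1) (hf00' : f0' 0 = 0)
    (hf1 : ∀ x, HasDerivAt f1 (f1' x) x)
    (hf1' : ∀ x, HasDerivAt f1' ((q x : ℂ) * f1 x) x)
    (hf10 : f1 0 = 0) (hf10' : f1' 0 = 1) :
    ∀ x : ℝ,
      (fun ω : ℂ => c ω x - (f0 x + h * f1 x)) =O[𝓝 0] (fun ω : ℂ => ω ^ 2) ∧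
      (fun ω : ℂ => c' ω x - (f0' x + h * f1' x)) =O[𝓝 0] (fun ω : ℂ => ω ^ 2) := by
  intro x
  have hz : ∀ t, HasDerivAt (fun t => f0 t + h * f1 t) (f0' t + h * f1' t) t :=
    fun t => (hf0 t).add ((hf1 t).const_mul h)
  have hz' : ∀ t, HasDerivAt (fun t => f0' t + h * f1' t) (q t * (f0 t + h * f1 t)) t :=
    fun t => ((hf0' t).add ((hf1' t).const_mul h)).congr_deriv (by ring)
  obtain ⟨Q, hQ⟩ := (isCompact_uIcc (a := 0) (b := x)).exists_bound_of_continuousOn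
    (continuous_ofReal.comp hq).continuousOn
  obtain ⟨M, hM⟩ := (isCompact_uIcc (a := 0) (b := x)).exists_bound_of_continuousOn
    (continuous_iff_continuousAt.2 fun t => (hz t).continuousAt).continuousOn
  have hpair : (fun ω : ℂ => (c ω x - (f0 x + h * f1 x), c' ω x - (f0' x + h * f1' x)))
      =O[𝓝 0] (fun ω : ℂ => ω ^ 2) := by
    refine IsBigO.of_bound (gronwallBound 0 (Q + 1) M |x|) ?_
    filter_upwards [Metric.closedBall_mem_nhds (0 : ℂ) one_pos] with ω hω
    rw [norm_pow, mul_comm _ (‖ω‖ ^ 2)]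
    exact norm_prod_sub_le_of_hasDerivAt_schrodinger (hc ω) (hc' ω) hz hz'
      (by simp [hc0, hf00, hf10]) (by simp [hc0', hf00', hf10']) (by simpa using hω) hQ hM
  exact ⟨isBigO_fst_prod.trans hpair, isBigO_snd_prod.trans hpair⟩

/-- For each fixed `x`, as `ω → 0` in `ℂ`,
`c(x,ω) = f0(x) + h·f1(x) + O(ω²)` and `c'(x,ω) = f0'(x) + h·f1'(x) + O(ω²)`. -/
theorem c_small_omega_asymptotics
    (d : ℝ) (hd : 0 < d) (q : ℝ → ℝ) (hq : Continuous q)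
    (hqsupp : ∀ x : ℝ, x ∉ Set.Icc 0 d → q x = 0) (h : ℂ)
    (c c' : ℂ → ℝ → ℂ)
    (hc : ∀ ω x, HasDerivAt (c ω) (c' ω x) x)
    (hc' : ∀ ω x, HasDerivAt (c' ω) (((q x : ℂ) - ω ^ 2) * c ω x) x)
    (hc0 : ∀ ω, c ω 0 = 1) (hc0' : ∀ ω, c' ω 0 = h)
    (f0 f0' f1 f1' : ℝ → ℂ)
    (hf0 : ∀ x, HasDerivAt f0 (f0' x) x)
    (hf0' : ∀ x, HasDerivAt f0' ((q x : ℂ) * f0 x) x)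
    (hf00 : f0 0 = 1) (hf00' : f0' 0 = 0)
    (hf1 : ∀ x, HasDerivAt f1 (f1' x) x)
    (hf1' : ∀ x, HasDerivAt f1' ((q x : ℂ) * f1 x) x)
    (hf10 : f1 0 = 0) (hf10' : f1' 0 = 1) :
    ∀ x : ℝ,
      (fun ω : ℂ => c ω x - (f0 x + h * f1 x)) =O[𝓝 0] (fun ω : ℂ => ω ^ 2) ∧
      (fun ω : ℂ => c' ω x - (f0' x + h * f1' x)) =O[𝓝 0] (fun ω : ℂ => ω ^ 2) :=
  c_small_omega_asymptotics_general q hq h c c' hc hc' hc0 hc0' f0 f0' f1 f1' hf0 hf0' hf00 hf00'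
    hf1 hf1' hf10 hf10'
end

section
/- For each fixed x ∈ ℝ, as ω → 0 in ℂ one has s(x,ω) = ω·f1(x) + O(ω³) and s'(x,ω) = ω·f1'(x) + O(ω³), where ' denotes the derivative with respect to x. -/
/-!
The difference `g = s(·,ω) - ω f1` solves `g'' = (q - ω²) g - ω³ f1` with `g(0) = g'(0) = 0`.
Grönwall's inequality for the first-order system satisfied by `(g, g')`, whose coefficients are
bounded on `[0, x]` uniformly in `‖ω‖ ≤ 1` and whose forcing is `O(ω³)`, bounds both `g(x)` and
`g'(x)` by a constant times `‖ω‖³`.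
-/

open Complex Filter Topology Asymptotics Set

lemma gronwallBound_zero_mul_right (K ε c x : ℝ) :
    gronwallBound 0 K (ε * c) x = gronwallBound 0 K ε x * c := by
  unfold gronwallBound
  split_ifs <;> ring

section SecondOrder

variable {E : Type*} [NormedAddCommGroup E] [NormedSpace ℂ E]

lemma norm_le_gronwallBound_of_second_order_of_nonneg {Q : ℝ → ℂ} {g g' u : ℝ → E}
    {K ε b : ℝ} (hg : ∀ t, HasDerivAt g (g' t) t)
    (hg' : ∀ t, HasDerivAt g' (Q t • g t + u t) t) (h0 : g 0 = 0) (h0' : g' 0 = 0)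
    (hb : 0 ≤ b) (hK : 1 ≤ K) (hQ : ∀ t ∈ Icc 0 b, ‖Q t‖ ≤ K)
    (hu : ∀ t ∈ Icc 0 b, ‖u t‖ ≤ ε) :
    ‖g b‖ ≤ gronwallBound 0 K ε b ∧ ‖g' b‖ ≤ gronwallBound 0 K ε b := by
  have hε : 0 ≤ ε := (norm_nonneg _).trans (hu 0 (left_mem_Icc.2 hb))
  have hF : ∀ t, HasDerivAt (fun t => (g t, g' t)) (g' t, Q t • g t + u t) t :=
    fun t => (hg t).prodMk (hg' t)
  have hbound : ∀ t ∈ Ico 0 b,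
      ‖((g' t, Q t • g t + u t) : E × E)‖ ≤ K * ‖((g t, g' t) : E × E)‖ + ε := by
    intro t ht
    have hQt := hQ t (Ico_subset_Icc_self ht)
    have hut := hu t (Ico_subset_Icc_self ht)
    have hmax_nonneg : 0 ≤ max ‖g t‖ ‖g' t‖ := (norm_nonneg _).trans (le_max_left _ _)
    rw [Prod.norm_mk, Prod.norm_mk]
    refine max_le ?_ ?_
    · exact (le_max_right _ _).trans
        ((le_mul_of_one_le_left hmax_nonneg hK).trans (le_add_of_nonneg_right hε))
    · calc ‖Q t • g t + u t‖ ≤ ‖Q t‖ * ‖g t‖ + ‖u t‖ := (norm_add_le _ _).trans_eq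
            (by rw [norm_smul])
        _ ≤ K * max ‖g t‖ ‖g' t‖ + ε :=
            add_le_add (mul_le_mul hQt (le_max_left _ _) (norm_nonneg _) (by linarith)) hut
  have hgron := norm_le_gronwallBound_of_norm_deriv_right_le (δ := 0)
    (fun t _ => (hF t).continuousAt.continuousWithinAt) (fun t _ => (hF t).hasDerivWithinAt)
    (by simp [h0, h0']) hbound b (right_mem_Icc.2 hb)
  rw [sub_zero, Prod.norm_mk, max_le_iff] at hgron
  exact hgron

lemma norm_le_gronwallBound_of_second_order {Q : ℝ → ℂ} {g g' u : ℝ → E} {K ε x : ℝ}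
    (hg : ∀ t, HasDerivAt g (g' t) t) (hg' : ∀ t, HasDerivAt g' (Q t • g t + u t) t)
    (h0 : g 0 = 0) (h0' : g' 0 = 0) (hK : 1 ≤ K) (hQ : ∀ t ∈ uIcc 0 x, ‖Q t‖ ≤ K)
    (hu : ∀ t ∈ uIcc 0 x, ‖u t‖ ≤ ε) :
    ‖g x‖ ≤ gronwallBound 0 K ε |x| ∧ ‖g' x‖ ≤ gronwallBound 0 K ε |x| := by
  rcases le_total 0 x with hx | hx
  · rw [uIcc_of_le hx] at hQ hu
    rw [abs_of_nonneg hx]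
    exact norm_le_gronwallBound_of_second_order_of_nonneg hg hg' h0 h0' hx hK hQ hu
  · -- Reflect: `t ↦ g (-t)` solves the same kind of equation, with `Q`, `u` reflected.
    have hmem : ∀ t ∈ Icc 0 (-x), -t ∈ uIcc 0 x := fun t ht => by
      rw [uIcc_of_ge hx]; exact ⟨by linarith [ht.2], by linarith [ht.1]⟩
    have hneg : ∀ {G G' : ℝ → E}, (∀ t, HasDerivAt G (G' t) t) →
        ∀ t, HasDerivAt (fun t => G (-t)) (-G' (-t)) t := fun hG t =>
      ((hG (-t)).scomp t (hasDerivAt_neg t)).congr_deriv (by simp)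
    have hrefl := norm_le_gronwallBound_of_second_order_of_nonneg (hneg hg)
      (fun t => (hneg hg' t).neg.congr_deriv (neg_neg _)) (by simpa using h0) (by simpa using h0')
      (neg_nonneg.2 hx) hK (fun t ht => hQ _ (hmem t ht)) (fun t ht => hu _ (hmem t ht))
    rw [abs_of_nonpos hx]
    simpa using hrefl

end SecondOrder

lemma norm_s_sub_mul_f1_le {q : ℝ → ℝ} {s s' : ℂ → ℝ → ℂ} {f1 f1' : ℝ → ℂ}
    (hs : ∀ ω x, HasDerivAt (s ω) (s' ω x) x)
    (hs' : ∀ ω x, HasDerivAt (s' ω) (((q x : ℂ) - ω ^ 2) * s ω x) x)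
    (hs0 : ∀ ω, s ω 0 = 0) (hs0' : ∀ ω, s' ω 0 = ω)
    (hf1 : ∀ x, HasDerivAt f1 (f1' x) x)
    (hf1' : ∀ x, HasDerivAt f1' ((q x : ℂ) * f1 x) x)
    (hf10 : f1 0 = 0) (hf10' : f1' 0 = 1) {x M N : ℝ}
    (hqM : ∀ t ∈ uIcc 0 x, ‖q t‖ ≤ M) (hf1N : ∀ t ∈ uIcc 0 x, ‖f1 t‖ ≤ N)
    {ω : ℂ} (hω : ‖ω‖ ≤ 1) :
    ‖s ω x - ω * f1 x‖ ≤ gronwallBound 0 (M + 1) N |x| * ‖ω‖ ^ 3 ∧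
      ‖s' ω x - ω * f1' x‖ ≤ gronwallBound 0 (M + 1) N |x| * ‖ω‖ ^ 3 := by
  have hM : 0 ≤ M := (norm_nonneg _).trans (hqM 0 left_mem_uIcc)
  have hω2 : ‖ω‖ ^ 2 ≤ 1 := pow_le_one₀ (norm_nonneg _) hω
  have hdiff' : ∀ t, HasDerivAt (fun t => s' ω t - ω * f1' t)
      (((q t : ℂ) - ω ^ 2) • (s ω t - ω * f1 t) + -(ω ^ 3) * f1 t) t := fun t =>
    ((hs' ω t).sub ((hf1' t).const_mul ω)).congr_deriv (by rw [smul_eq_mul]; ring)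
  rw [← gronwallBound_zero_mul_right]
  refine norm_le_gronwallBound_of_second_order (fun t => (hs ω t).sub ((hf1 t).const_mul ω))
    hdiff' (by simp [hs0, hf10]) (by simp [hs0', hf10']) (by linarith) (fun t ht => ?_)
    (fun t ht => ?_)
  · calc ‖(q t : ℂ) - ω ^ 2‖ ≤ ‖q t‖ + ‖ω‖ ^ 2 :=
          (norm_sub_le _ _).trans_eq (by rw [Complex.norm_real, norm_pow])
      _ ≤ M + 1 := add_le_add (hqM t ht) hω2
  · rw [norm_mul, norm_neg, norm_pow, mul_comm N]
    exact mul_le_mul_of_nonneg_left (hf1N t ht) (by positivity)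

theorem s_small_omega_asymptotics_general
    (q : ℝ → ℝ) (hq : Continuous q)
    (s s' : ℂ → ℝ → ℂ)
    (hs : ∀ ω x, HasDerivAt (s ω) (s' ω x) x)
    (hs' : ∀ ω x, HasDerivAt (s' ω) (((q x : ℂ) - ω ^ 2) * s ω x) x)
    (hs0 : ∀ ω, s ω 0 = 0) (hs0' : ∀ ω, s' ω 0 = ω)
    (f1 f1' : ℝ → ℂ)
    (hf1 : ∀ x, HasDerivAt f1 (f1' x) x)
    (hf1' : ∀ x, HasDerivAt f1' ((q x : ℂ) * f1 x) x)
    (hf10 : f1 0 = 0) (hf10' : f1' 0 = 1) :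
    ∀ x : ℝ,
      (fun ω : ℂ => s ω x - ω * f1 x) =O[𝓝 0] (fun ω : ℂ => ω ^ 3) ∧
      (fun ω : ℂ => s' ω x - ω * f1' x) =O[𝓝 0] (fun ω : ℂ => ω ^ 3) := by
  intro x
  have hf1c : Continuous f1 := continuous_iff_continuousAt.2 fun t => (hf1 t).continuousAt
  obtain ⟨M, hM⟩ := isCompact_uIcc.exists_bound_of_continuousOn (s := uIcc 0 x) hq.continuousOn
  obtain ⟨N, hN⟩ := isCompact_uIcc.exists_bound_of_continuousOn (s := uIcc 0 x) hf1c.continuousOn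
  have hbound := eventually_of_mem (Metric.closedBall_mem_nhds (0 : ℂ) one_pos) fun ω hω =>
    norm_s_sub_mul_f1_le hs hs' hs0 hs0' hf1 hf1' hf10 hf10' hM hN (by simpa using hω)
  exact ⟨.of_bound _ (hbound.mono fun ω h => by simpa [norm_pow] using h.1),
    .of_bound _ (hbound.mono fun ω h => by simpa [norm_pow] using h.2)⟩

/-- For each fixed `x`, as `ω → 0` in `ℂ`,
`s(x,ω) = ω·f1(x) + O(ω³)` and `s'(x,ω) = ω·f1'(x) + O(ω³)`. -/
theorem s_small_omega_asymptotics
    (d : ℝ) (hd : 0 < d) (q : ℝ → ℝ) (hq : Continuous q)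
    (hqsupp : ∀ x : ℝ, x ∉ Set.Icc 0 d → q x = 0) (h : ℂ)
    (s s' : ℂ → ℝ → ℂ)
    (hs : ∀ ω x, HasDerivAt (s ω) (s' ω x) x)
    (hs' : ∀ ω x, HasDerivAt (s' ω) (((q x : ℂ) - ω ^ 2) * s ω x) x)
    (hs0 : ∀ ω, s ω 0 = 0) (hs0' : ∀ ω, s' ω 0 = ω)
    (f1 f1' : ℝ → ℂ)
    (hf1 : ∀ x, HasDerivAt f1 (f1' x) x)
    (hf1' : ∀ x, HasDerivAt f1' ((q x : ℂ) * f1 x) x)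
    (hf10 : f1 0 = 0) (hf10' : f1' 0 = 1) :
    ∀ x : ℝ,
      (fun ω : ℂ => s ω x - ω * f1 x) =O[𝓝 0] (fun ω : ℂ => ω ^ 3) ∧
      (fun ω : ℂ => s' ω x - ω * f1' x) =O[𝓝 0] (fun ω : ℂ => ω ^ 3) :=
  s_small_omega_asymptotics_general q hq s s' hs hs' hs0 hs0' f1 f1' hf1 hf1' hf10 hf10'
end

section
/- For each fixed x ∈ ℝ, as ω → 0 (ω ≠ 0) one has y1(x,ω) = f0(x)f1'(d) − f0'(d)f1(x) + iω·[ f0(d)f1(x) − f0(x)f1(d) + d·( f0(x)f1'(d) − f0'(d)f1(x) ) ] + O(ω²). -/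
open Complex Filter Topology Asymptotics Set

/-!
Let `u ω` be the solution of `u'' = q u` with the same Cauchy data `(e, iωe)`, `e = exp (iωd)`,
at `d` as `y1 ω`. The Wronskian `f0 f1' - f0' f1` is constant, hence `1`, so
`u ω = e (g0 + iω g1)` with `g0 = f1'(d) f0 - f0'(d) f1` and `g1 = f0(d) f1 - f1(d) f0`.
The difference `z = y1 ω - u ω` solves `z'' = q z - ω² y1 ω` with zero data at `d`.
Grönwall's inequality for `(y1, y1')` bounds `y1 ω` on the segment between `d` and `x` uniformly
in `|ω| ≤ 1`, and Grönwall's inequality for `(z, z')` then gives `z x = O(ω²)`. Expanding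
`e = 1 + iωd + O(ω²)` in `u ω x` yields the claim.
-/

section Gronwall

variable {E : Type*} [NormedAddCommGroup E] [NormedSpace ℝ E] {f f' : ℝ → E}
  {a b δ K ε : ℝ}

theorem norm_le_gronwallBound_of_hasDerivAt_Icc (hK : 0 ≤ K) (hε : 0 ≤ ε)
    (hf : ∀ t ∈ Icc a b, HasDerivAt f (f' t) t) (ha : ‖f a‖ ≤ δ)
    (bound : ∀ t ∈ Icc a b, ‖f' t‖ ≤ K * ‖f t‖ + ε) :
    ∀ t ∈ Icc a b, ‖f t‖ ≤ gronwallBound δ K ε (b - a) := fun t ht =>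
  (norm_le_gronwallBound_of_norm_deriv_right_le
      (fun s hs => (hf s hs).continuousAt.continuousWithinAt)
      (fun s hs => (hf s (Ico_subset_Icc_self hs)).hasDerivWithinAt) ha
      (fun s hs => bound s (Ico_subset_Icc_self hs)) t ht).trans
    (gronwallBound_mono ((norm_nonneg _).trans ha) hε hK (by linarith [ht.2]))

theorem norm_le_gronwallBound_of_hasDerivAt_uIcc (hK : 0 ≤ K) (hε : 0 ≤ ε)
    (hf : ∀ t ∈ uIcc a b, HasDerivAt f (f' t) t) (ha : ‖f a‖ ≤ δ)
    (bound : ∀ t ∈ uIcc a b, ‖f' t‖ ≤ K * ‖f t‖ + ε) :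
    ∀ t ∈ uIcc a b, ‖f t‖ ≤ gronwallBound δ K ε |b - a| := by
  rcases le_total a b with hab | hba
  · rw [uIcc_of_le hab, abs_of_nonneg (sub_nonneg.2 hab)] at *
    exact norm_le_gronwallBound_of_hasDerivAt_Icc hK hε hf ha bound
  · rw [uIcc_of_ge hba, abs_of_nonpos (sub_nonpos.2 hba), neg_sub] at *
    intro t ht
    have := norm_le_gronwallBound_of_hasDerivAt_Icc (f := fun s => f (-s))
      (f' := fun s => (-1 : ℝ) • f' (-s)) (a := -a) (b := -b) hK hε
      (fun s hs => (hf (-s) (neg_mem_Icc_iff.2 hs)).scomp s (hasDerivAt_neg s))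
      (by simpa using ha)
      (fun s hs => by simpa using bound (-s) (neg_mem_Icc_iff.2 hs))
      (-t) (neg_mem_Icc_iff.1 (by simpa using ht))
    simpa [sub_eq_add_neg, add_comm] using this

end Gronwall

section SecondOrder

variable {p r y y' u u' : ℝ → ℂ} {a b δ K ε : ℝ}

theorem norm_prod_le_gronwallBound_of_second_order (hK : 1 ≤ K)
    (hy : ∀ t ∈ uIcc a b, HasDerivAt y (y' t) t)
    (hy' : ∀ t ∈ uIcc a b, HasDerivAt y' (p t * y t + r t) t)
    (hp : ∀ t ∈ uIcc a b, ‖p t‖ ≤ K) (hr : ∀ t ∈ uIcc a b, ‖r t‖ ≤ ε)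
    (ha : ‖(y a, y' a)‖ ≤ δ) :
    ∀ t ∈ uIcc a b, ‖(y t, y' t)‖ ≤ gronwallBound δ K ε |b - a| := by
  have hε : 0 ≤ ε := (norm_nonneg _).trans (hr a left_mem_uIcc)
  refine norm_le_gronwallBound_of_hasDerivAt_uIcc (by linarith) hε
    (fun t ht => (hy t ht).prodMk (hy' t ht)) ha fun t ht => norm_prod_le_iff.2 ⟨?_, ?_⟩
  · nlinarith [norm_snd_le (y t, y' t), norm_nonneg (y t, y' t)]
  · calc ‖p t * y t + r t‖ ≤ ‖p t‖ * ‖y t‖ + ‖r t‖ :=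
          (norm_add_le _ _).trans_eq (by rw [norm_mul])
      _ ≤ K * ‖(y t, y' t)‖ + ε :=
        add_le_add (mul_le_mul (hp t ht) (norm_fst_le (y t, y' t)) (norm_nonneg _) (by linarith))
          (hr t ht)

theorem wronskian_eq_of_second_order (hy : ∀ t, HasDerivAt y (y' t) t)
    (hy' : ∀ t, HasDerivAt y' (p t * y t) t) (hu : ∀ t, HasDerivAt u (u' t) t)
    (hu' : ∀ t, HasDerivAt u' (p t * u t) t) (s t : ℝ) :
    y t * u' t - y' t * u t = y s * u' s - y' s * u s := by
  have hW (t : ℝ) : HasDerivAt (fun s => y s * u' s - y' s * u s) 0 t :=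
    (((hy t).mul (hu' t)).sub ((hy' t).mul (hu t))).congr_deriv (by ring)
  exact is_const_of_deriv_eq_zero (fun t => (hW t).differentiableAt) (fun t => (hW t).deriv) t s

theorem norm_sub_le_of_second_order {μ : ℂ} (hK : 1 ≤ K)
    (hp : ∀ t ∈ uIcc a b, ‖p t‖ + ‖μ‖ ≤ K)
    (hy : ∀ t ∈ uIcc a b, HasDerivAt y (y' t) t)
    (hy' : ∀ t ∈ uIcc a b, HasDerivAt y' ((p t - μ) * y t) t)
    (hu : ∀ t ∈ uIcc a b, HasDerivAt u (u' t) t)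
    (hu' : ∀ t ∈ uIcc a b, HasDerivAt u' (p t * u t) t)
    (ha : y a = u a) (ha' : y' a = u' a) (hδ : ‖(y a, y' a)‖ ≤ δ) :
    ‖y b - u b‖ ≤ ‖μ‖ * gronwallBound 0 K (gronwallBound δ K 0 |b - a|) |b - a| := by
  set M := gronwallBound δ K 0 |b - a|
  have hyM (t : ℝ) (ht : t ∈ uIcc a b) : ‖y t‖ ≤ M :=
    (norm_fst_le _).trans <| norm_prod_le_gronwallBound_of_second_order (r := 0) hK hy
      (fun t ht => by simpa using hy' t ht)
      (fun t ht => (norm_sub_le _ _).trans (hp t ht)) (fun _ _ => norm_zero.le) hδ t ht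
  have hz := norm_prod_le_gronwallBound_of_second_order (y := y - u) (y' := y' - u')
    (r := fun t => -μ * y t) (δ := 0) (ε := ‖μ‖ * M) hK
    (fun t ht => (hy t ht).sub (hu t ht))
    (fun t ht => ((hy' t ht).sub (hu' t ht)).congr_deriv (by simp only [Pi.sub_apply]; ring))
    (fun t ht => (le_add_of_nonneg_right (norm_nonneg _)).trans (hp t ht))
    (fun t ht => by rw [norm_mul, norm_neg]; gcongr; exact hyM t ht)
    (by simp [ha, ha']) b right_mem_uIcc
  have hK0 : K ≠ 0 := by positivity
  calc ‖y b - u b‖ ≤ gronwallBound 0 K (‖μ‖ * M) |b - a| := (norm_fst_le _).trans hz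
    _ = _ := by rw [gronwallBound_of_K_ne_0 hK0, gronwallBound_of_K_ne_0 hK0]; ring

end SecondOrder

theorem isBigO_sub_of_second_order {p : ℝ → ℂ} {a b : ℝ} (hp : ContinuousOn p (uIcc a b))
    {y y' u u' : ℂ → ℝ → ℂ}
    (hy : ∀ ω ≠ 0, ∀ t, HasDerivAt (y ω) (y' ω t) t)
    (hy' : ∀ ω ≠ 0, ∀ t, HasDerivAt (y' ω) ((p t - ω ^ 2) * y ω t) t)
    (hu : ∀ ω t, HasDerivAt (u ω) (u' ω t) t)
    (hu' : ∀ ω t, HasDerivAt (u' ω) (p t * u ω t) t)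
    (ha : ∀ ω ≠ 0, y ω a = u ω a) (ha' : ∀ ω ≠ 0, y' ω a = u' ω a)
    (hbdd : (fun ω => (y ω a, y' ω a)) =O[𝓝[≠] 0] (fun _ => (1 : ℝ))) :
    (fun ω => y ω b - u ω b) =O[𝓝[≠] 0] (· ^ 2) := by
  obtain ⟨P, hP⟩ := isCompact_uIcc.exists_bound_of_continuousOn hp
  obtain ⟨δ, hδ⟩ := hbdd.bound
  have hP0 : 0 ≤ P := (norm_nonneg _).trans (hP a left_mem_uIcc)
  have hsmall : ∀ᶠ ω : ℂ in 𝓝[≠] 0, ‖ω‖ ≤ 1 :=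
    nhdsWithin_le_nhds <| (continuous_norm.tendsto' (0 : ℂ) 0 norm_zero).eventually
      (eventually_le_nhds one_pos)
  refine .of_bound (gronwallBound 0 (P + 1) (gronwallBound δ (P + 1) 0 |b - a|) |b - a|) ?_
  filter_upwards [self_mem_nhdsWithin, hδ, hsmall] with ω hω hδω hω1
  rw [mul_comm]
  refine norm_sub_le_of_second_order (by linarith) (fun t ht => ?_) (fun t _ => hy ω hω t)
    (fun t _ => hy' ω hω t) (fun t _ => hu ω t) (fun t _ => hu' ω t) (ha ω hω) (ha' ω hω)
    (by simpa using hδω)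
  rw [norm_pow]
  nlinarith [hP t ht, norm_nonneg ω]

theorem isBigO_exp_mul_mul_add_sub (a b c : ℂ) :
    (fun w : ℂ => exp (w * c) * (a + w * b) - (a + w * (b + c * a))) =O[𝓝 0] (· ^ 2) := by
  have hc : Tendsto (· * c) (𝓝 0) (𝓝 0) := by
    simpa using (continuous_mul_const c).tendsto 0
  have hexp (n : ℕ) :
      (fun w : ℂ => exp (w * c) - ∑ i ∈ Finset.range n, (w * c) ^ i / i.factorial) =O[𝓝 0]
        (· ^ n) :=
    ((exp_sub_sum_range_isBigO_pow n).comp_tendsto hc).trans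
      ((isBigO_const_mul_self (c ^ n) _ _).congr_left fun w => by
        simp only [Function.comp_apply]; ring)
  have hlin : (fun w : ℂ => b * w ^ 1 * (exp (w * c) - ∑ i ∈ Finset.range 1,
      (w * c) ^ i / i.factorial)) =O[𝓝 0] (· ^ 2) :=
    (((isBigO_refl (· ^ 1) _).const_mul_left b).mul (hexp 1)).congr_right fun w => by ring
  refine (((hexp 2).const_mul_left a).add hlin).congr_left fun w => ?_
  simp only [Finset.sum_range_succ, Finset.sum_range_zero, Nat.factorial_zero, Nat.factorial_one,
    Nat.cast_one, pow_zero, pow_one, div_one]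
  ring

theorem jost_y1_small_omega_asymptotics_general
    (d : ℝ) (q : ℝ → ℝ) (hq : Continuous q)
    (y1 y1' : ℂ → ℝ → ℂ)
    (hy1 : ∀ ω : ℂ, ω ≠ 0 → ∀ x, HasDerivAt (y1 ω) (y1' ω x) x)
    (hy1' : ∀ ω : ℂ, ω ≠ 0 → ∀ x, HasDerivAt (y1' ω) (((q x : ℂ) - ω ^ 2) * y1 ω x) x)
    (hy1d : ∀ ω : ℂ, ω ≠ 0 → y1 ω d = Complex.exp (Complex.I * ω * d))
    (hy1d' : ∀ ω : ℂ, ω ≠ 0 → y1' ω d = Complex.I * ω * Complex.exp (Complex.I * ω * d))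
    (f0 f0' f1 f1' : ℝ → ℂ)
    (hf0 : ∀ x, HasDerivAt f0 (f0' x) x)
    (hf0' : ∀ x, HasDerivAt f0' ((q x : ℂ) * f0 x) x)
    (hf00 : f0 0 = 1) (hf00' : f0' 0 = 0)
    (hf1 : ∀ x, HasDerivAt f1 (f1' x) x)
    (hf1' : ∀ x, HasDerivAt f1' ((q x : ℂ) * f1 x) x)
    (hf10 : f1 0 = 0) (hf10' : f1' 0 = 1) :
    ∀ x : ℝ,
      (fun ω : ℂ => y1 ω x -
          (f0 x * f1' d - f0' d * f1 x +
            Complex.I * ω * (f0 d * f1 x - f0 x * f1 d +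
              (d : ℂ) * (f0 x * f1' d - f0' d * f1 x))))
        =O[𝓝[≠] 0] (fun ω : ℂ => ω ^ 2) := by
  intro x
  have hW : f0 d * f1' d - f0' d * f1 d = 1 := by
    rw [wronskian_eq_of_second_order hf0 hf0' hf1 hf1' 0 d, hf00, hf00', hf10, hf10']; ring
  -- `u ω = A ω * f0 + B ω * f1` solves `u'' = q u` with the Cauchy data of `y1 ω` at `d`
  set A : ℂ → ℂ := fun ω => exp (I * ω * d) * (f1' d - I * ω * f1 d)
  set B : ℂ → ℂ := fun ω => exp (I * ω * d) * (I * ω * f0 d - f0' d)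
  have hdata : (fun ω => (y1 ω d, y1' ω d)) =O[𝓝[≠] 0] (fun _ => (1 : ℝ)) := by
    have hcont : Continuous fun ω : ℂ => (exp (I * ω * d), I * ω * exp (I * ω * d)) := by
      fun_prop
    refine (((hcont.tendsto 0).mono_left nhdsWithin_le_nhds).isBigO_one ℝ).congr' ?_
      EventuallyEq.rfl
    filter_upwards [self_mem_nhdsWithin] with ω hω
    simp only [hy1d ω hω, hy1d' ω hω]
  have hclose := isBigO_sub_of_second_order (b := x) (by fun_prop) hy1 hy1'
    (u := fun ω t => A ω * f0 t + B ω * f1 t) (u' := fun ω t => A ω * f0' t + B ω * f1' t)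
    (fun ω t => ((hf0 t).const_mul _).add ((hf1 t).const_mul _))
    (fun ω t => (((hf0' t).const_mul _).add ((hf1' t).const_mul _)).congr_deriv (by ring))
    (fun ω hω => by rw [hy1d ω hω]; linear_combination (-exp (I * ω * d)) * hW)
    (fun ω hω => by rw [hy1d' ω hω]; linear_combination (-I * ω * exp (I * ω * d)) * hW)
    hdata
  have hplane := ((isBigO_exp_mul_mul_add_sub (f0 x * f1' d - f0' d * f1 x)
    (f0 d * f1 x - f0 x * f1 d) d).comp_tendsto
      ((continuous_const_mul I).tendsto' 0 0 (mul_zero I))).trans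
    (isBigO_of_le _ fun ω : ℂ => (by simp [mul_pow] : ‖(I * ω) ^ 2‖ ≤ ‖ω ^ 2‖))
  exact (hclose.add (hplane.mono nhdsWithin_le_nhds)).congr_left fun ω => by
    simp only [Function.comp_apply, A, B]; ring

/-- For each fixed `x`, as `ω → 0` (`ω ≠ 0`),
`y1(x,ω) = f0(x)f1'(d) − f0'(d)f1(x)
  + iω·[f0(d)f1(x) − f0(x)f1(d) + d·(f0(x)f1'(d) − f0'(d)f1(x))] + O(ω²)`. -/
theorem jost_y1_small_omega_asymptotics
    (d : ℝ) (hd : 0 < d) (q : ℝ → ℝ) (hq : Continuous q)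
    (hqsupp : ∀ x : ℝ, x ∉ Set.Icc 0 d → q x = 0)
    (y1 y1' : ℂ → ℝ → ℂ)
    (hy1 : ∀ ω : ℂ, ω ≠ 0 → ∀ x, HasDerivAt (y1 ω) (y1' ω x) x)
    (hy1' : ∀ ω : ℂ, ω ≠ 0 → ∀ x, HasDerivAt (y1' ω) (((q x : ℂ) - ω ^ 2) * y1 ω x) x)
    (hy1d : ∀ ω : ℂ, ω ≠ 0 → y1 ω d = Complex.exp (Complex.I * ω * d))
    (hy1d' : ∀ ω : ℂ, ω ≠ 0 → y1' ω d = Complex.I * ω * Complex.exp (Complex.I * ω * d))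
    (f0 f0' f1 f1' : ℝ → ℂ)
    (hf0 : ∀ x, HasDerivAt f0 (f0' x) x)
    (hf0' : ∀ x, HasDerivAt f0' ((q x : ℂ) * f0 x) x)
    (hf00 : f0 0 = 1) (hf00' : f0' 0 = 0)
    (hf1 : ∀ x, HasDerivAt f1 (f1' x) x)
    (hf1' : ∀ x, HasDerivAt f1' ((q x : ℂ) * f1 x) x)
    (hf10 : f1 0 = 0) (hf10' : f1' 0 = 1) :
    ∀ x : ℝ,
      (fun ω : ℂ => y1 ω x -
          (f0 x * f1' d - f0' d * f1 x +
            Complex.I * ω * (f0 d * f1 x - f0 x * f1 d +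
              (d : ℂ) * (f0 x * f1' d - f0' d * f1 x))))
        =O[𝓝[≠] 0] (fun ω : ℂ => ω ^ 2) :=
  jost_y1_small_omega_asymptotics_general d q hq y1 y1' hy1 hy1' hy1d hy1d' f0 f0' f1 f1' hf0 hf0'
    hf00 hf00' hf1 hf1' hf10 hf10'
end

section
/- As ω → 0 (ω ≠ 0), the transmission coefficient satisfies a(ω) = f0'(d)/(2iω) − (1/2)·( f0(d) − d·f0'(d) + f1'(d) ) + O(ω). In particular, a(ω) has a simple pole at the origin if and only if f0'(d) ≠ 0, i.e., if and only if zero is not a Neumann eigenvalue of −d²/dx² + q on [0,d]. -/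
/-!
Near `ω = 0` the Jost solution `y₂(·, ω)` solves `y'' = (q - ω²) y` with Cauchy data `(1, -iω)`
at `0`, as does `f₀ - iω f₁` up to the forcing term `-ω² y₂`; a Grönwall estimate on `[0, d]`
therefore gives `y₂ = f₀ - iω f₁ + O(ω²)` at `d`, together with derivatives. The Wronskian is
constant, and at `d`, where `y₁` is explicit, it gives
`a(ω) = -(e^{iωd} / (2iω)) (iω y₂(d) - y₂'(d))`; expanding `e^{iωd}` to second order yields the
formula. The Neumann characterisation is uniqueness for the Cauchy problem: a solution with
`u'(0) = 0` is `u(0) f₀`.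
-/

open Complex Filter Topology Asymptotics Set

theorem gronwallBound_zero_mul (K c ε x : ℝ) :
    gronwallBound 0 K (c * ε) x = c * gronwallBound 0 K ε x := by
  unfold gronwallBound
  split_ifs <;> ring

theorem norm_prod_le_gronwallBound_of_second_order_s6 {E : Type*} [NormedAddCommGroup E]
    [NormedSpace ℝ E] {w w' F : ℝ → E} {δ K ε a b : ℝ} (hK : 1 ≤ K) (hε : 0 ≤ ε)
    (hw : ∀ x, HasDerivAt w (w' x) x) (hw' : ∀ x, HasDerivAt w' (F x) x)
    (ha : ‖(w a, w' a)‖ ≤ δ) (bound : ∀ x ∈ Ico a b, ‖F x‖ ≤ K * ‖w x‖ + ε) :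
    ∀ x ∈ Icc a b, ‖(w x, w' x)‖ ≤ gronwallBound δ K ε (x - a) := by
  have hder : ∀ x, HasDerivAt (fun t => (w t, w' t)) (w' x, F x) x :=
    fun x => (hw x).prodMk (hw' x)
  refine norm_le_gronwallBound_of_norm_deriv_right_le
    (fun x _ => (hder x).continuousAt.continuousWithinAt)
    (fun x _ => (hder x).hasDerivWithinAt) ha fun x hx => ?_
  have hfst : ‖w x‖ ≤ ‖(w x, w' x)‖ := norm_fst_le (w x, w' x)
  have hsnd : ‖w' x‖ ≤ ‖(w x, w' x)‖ := norm_snd_le (w x, w' x)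
  refine norm_prod_le_iff.mpr ⟨?_, (bound x hx).trans (by gcongr)⟩
  nlinarith [norm_nonneg (w x, w' x)]

/-- In `-u'' + q u = ω² u`, the potential `V` stands for `q - ω²`. -/
structure SolvesSchrodinger (V u u' : ℝ → ℂ) : Prop where
  hasDerivAt : ∀ x, HasDerivAt u (u' x) x
  hasDerivAt_deriv : ∀ x, HasDerivAt u' (V x * u x) x

namespace SolvesSchrodinger

variable {V u u' v v' : ℝ → ℂ} {a b K δ : ℝ}

theorem sub (hu : SolvesSchrodinger V u u') (hv : SolvesSchrodinger V v v') :
    SolvesSchrodinger V (fun x => u x - v x) (fun x => u' x - v' x) where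
  hasDerivAt x := (hu.hasDerivAt x).sub (hv.hasDerivAt x)
  hasDerivAt_deriv x :=
    ((hu.hasDerivAt_deriv x).sub (hv.hasDerivAt_deriv x)).congr_deriv (mul_sub _ _ _).symm

theorem const_mul (hu : SolvesSchrodinger V u u') (c : ℂ) :
    SolvesSchrodinger V (fun x => c * u x) (fun x => c * u' x) where
  hasDerivAt x := (hu.hasDerivAt x).const_mul c
  hasDerivAt_deriv x := by
    simpa only [mul_left_comm] using (hu.hasDerivAt_deriv x).const_mul c

theorem wronskian_eq (hu : SolvesSchrodinger V u u') (hv : SolvesSchrodinger V v v') (a b : ℝ) :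
    u' a * v a - u a * v' a = u' b * v b - u b * v' b := by
  have hW : ∀ x, HasDerivAt (fun t => u' t * v t - u t * v' t) 0 x := fun x =>
    (((hu.hasDerivAt_deriv x).mul (hv.hasDerivAt x)).sub
      ((hu.hasDerivAt x).mul (hv.hasDerivAt_deriv x))).congr_deriv (by ring)
  exact is_const_of_deriv_eq_zero (fun x => (hW x).differentiableAt) (fun x => (hW x).deriv) a b

theorem norm_le (hu : SolvesSchrodinger V u u') (hK : 1 ≤ K) (hV : ∀ x ∈ Icc a b, ‖V x‖ ≤ K)
    (ha : ‖(u a, u' a)‖ ≤ δ) : ∀ x ∈ Icc a b, ‖(u x, u' x)‖ ≤ δ * Real.exp (K * (x - a)) := by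
  intro x hx
  rw [← gronwallBound_ε0]
  refine norm_prod_le_gronwallBound_of_second_order_s6 hK le_rfl hu.hasDerivAt
    hu.hasDerivAt_deriv ha (fun t ht => ?_) x hx
  rw [norm_mul, add_zero]
  gcongr
  exact hV t (Ico_subset_Icc_self ht)

theorem eq_zero_of_initial_eq_zero (hu : SolvesSchrodinger V u u') (hV : ∀ x ∈ Icc a b, ‖V x‖ ≤ K)
    (ha : u a = 0) (ha' : u' a = 0) : ∀ x ∈ Icc a b, u x = 0 ∧ u' x = 0 := by
  intro x hx
  have h := hu.norm_le (δ := 0) (le_max_right K 1) (fun t ht => (hV t ht).trans (le_max_left K 1))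
    (by simp [ha, ha']) x hx
  simpa [Prod.ext_iff] using h

theorem norm_sub_le_of_sub_const {y y' : ℝ → ℂ} {c : ℂ} {B : ℝ}
    (hy : SolvesSchrodinger (fun x => V x - c) y y') (hu : SolvesSchrodinger V u u')
    (hK : 1 ≤ K) (hV : ∀ x ∈ Icc a b, ‖V x‖ ≤ K) (hB : ∀ x ∈ Icc a b, ‖y x‖ ≤ B)
    (ha : y a = u a) (ha' : y' a = u' a) :
    ∀ x ∈ Icc a b, ‖(y x - u x, y' x - u' x)‖ ≤ gronwallBound 0 K (‖c‖ * B) (x - a) := by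
  intro x hx
  have hB0 : 0 ≤ B := (norm_nonneg _).trans (hB a ⟨le_rfl, hx.1.trans hx.2⟩)
  refine norm_prod_le_gronwallBound_of_second_order_s6 hK (by positivity)
    (fun t => (hy.hasDerivAt t).sub (hu.hasDerivAt t))
    (fun t => (hy.hasDerivAt_deriv t).sub (hu.hasDerivAt_deriv t)) (by simp [ha, ha'])
    (fun t ht => ?_) x hx
  have ht := Ico_subset_Icc_self ht
  calc ‖(V t - c) * y t - V t * u t‖ = ‖V t * (y t - u t) - c * y t‖ := by congr 1; ring
    _ ≤ ‖V t‖ * ‖y t - u t‖ + ‖c‖ * ‖y t‖ :=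
      (norm_sub_le _ _).trans_eq (by rw [norm_mul, norm_mul])
    _ ≤ K * ‖y t - u t‖ + ‖c‖ * B := by gcongr; exacts [hV t ht, hB t ht]

end SolvesSchrodinger

theorem isBigO_sub_of_solvesSchrodinger_sub_sq {V : ℝ → ℂ} {a b : ℝ} (hab : a ≤ b)
    (hV : ContinuousOn V (Icc a b)) {y y' : ℂ → ℝ → ℂ}
    (hy : ∀ ω ≠ 0, SolvesSchrodinger (fun x => V x - ω ^ 2) (y ω) (y' ω))
    {f f' g g' : ℝ → ℂ} (hf : SolvesSchrodinger V f f') (hg : SolvesSchrodinger V g g')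
    (hya : ∀ ω ≠ 0, y ω a = f a - I * ω * g a) (hya' : ∀ ω ≠ 0, y' ω a = f' a - I * ω * g' a) :
    (fun ω => (y ω b - (f b - I * ω * g b), y' ω b - (f' b - I * ω * g' b)))
      =O[𝓝[≠] 0] (fun ω => ω ^ 2) := by
  obtain ⟨C, hC⟩ := isCompact_Icc.exists_bound_of_continuousOn hV
  set K := C + 1
  have hK : 1 ≤ K := by have := (norm_nonneg _).trans (hC a ⟨le_rfl, hab⟩); linarith
  set δ := ‖(f a, f' a)‖ + ‖(g a, g' a)‖
  set B := δ * Real.exp (K * (b - a))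
  refine IsBigO.of_bound (gronwallBound 0 K B (b - a)) ?_
  filter_upwards [self_mem_nhdsWithin,
    nhdsWithin_le_nhds (Metric.closedBall_mem_nhds (0 : ℂ) one_pos)] with ω hω hω1
  replace hω1 : ‖ω‖ ≤ 1 := by simpa using hω1
  have hVω : ∀ x ∈ Icc a b, ‖V x - ω ^ 2‖ ≤ K := fun x hx => by
    have := hC x hx
    calc ‖V x - ω ^ 2‖ ≤ ‖V x‖ + ‖ω‖ ^ 2 := (norm_sub_le _ _).trans_eq (by rw [norm_pow])
      _ ≤ K := by nlinarith [norm_nonneg ω]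
  have hδ : ‖(y ω a, y' ω a)‖ ≤ δ := by
    have : (y ω a, y' ω a) = (f a, f' a) - (I * ω) • (g a, g' a) := by
      simp [hya ω hω, hya' ω hω]
    rw [this]
    refine (norm_sub_le _ _).trans (add_le_add le_rfl ?_)
    rw [norm_smul, norm_mul, norm_I, one_mul]
    exact mul_le_of_le_one_left (norm_nonneg _) hω1
  have hyB : ∀ x ∈ Icc a b, ‖y ω x‖ ≤ B := fun x hx =>
    (norm_fst_le (y ω x, y' ω x)).trans <| ((hy ω hω).norm_le hK hVω hδ x hx).trans <| by
      show _ ≤ δ * Real.exp (K * (b - a))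
      gcongr
      exact hx.2
  have := (hy ω hω).norm_sub_le_of_sub_const (hf.sub (hg.const_mul (I * ω))) hK
    (fun x hx => (hC x hx).trans (by linarith)) hyB (hya ω hω) (hya' ω hω) b ⟨hab, le_rfl⟩
  rwa [gronwallBound_zero_mul, mul_comm ‖ω ^ 2‖] at this

theorem Complex.isBigO_exp_sub_one_sub_id :
    (fun z : ℂ => exp z - 1 - z) =O[𝓝 0] (fun z => z ^ 2) :=
  IsBigO.of_bound 1 <| by
    filter_upwards [Metric.closedBall_mem_nhds (0 : ℂ) one_pos] with z hz
    simpa using norm_exp_sub_one_sub_id_le (by simpa using hz)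

theorem Asymptotics.IsBigO.div_const_mul {α 𝕜 : Type*} [NormedField 𝕜] {l : Filter α}
    {f g : α → 𝕜} (hf : f =O[l] (fun x => g x ^ 2)) (c : 𝕜) :
    (fun x => f x / (c * g x)) =O[l] g := by
  have := hf.mul (isBigO_const_mul_self c⁻¹ (fun x => (g x)⁻¹) l)
  refine (this.congr_left fun x => ?_).congr_right fun x => ?_
  · simp [div_eq_mul_inv, mul_comm]
  · rcases eq_or_ne (g x) 0 with h | h
    · simp [h]
    · field_simp

theorem tendsto_mul_of_isBigO_sub_div {f : ℂ → ℂ} {b c k : ℂ}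
    (h : (fun ω => f ω - (c / (b * ω) - k)) =O[𝓝[≠] 0] (fun ω => ω)) :
    Tendsto (fun ω => ω * f ω) (𝓝[≠] 0) (𝓝 (c / b)) := by
  have hid : Tendsto (fun ω : ℂ => ω) (𝓝[≠] 0) (𝓝 0) := nhdsWithin_le_nhds
  have := (hid.mul (h.trans_tendsto hid)).add (tendsto_const_nhds (x := c / b) |>.sub
    (hid.mul_const k))
  rw [zero_mul, zero_mul, sub_zero, zero_add] at this
  refine this.congr' ?_
  filter_upwards [self_mem_nhdsWithin] with ω hω
  rw [mul_sub, mul_sub, mul_div_assoc', mul_comm b, ← div_div, mul_div_cancel_left₀ _ hω]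
  ring

theorem isBigO_transmission_sub (d : ℝ) {A A' B B' : ℂ} {y y' : ℂ → ℂ}
    (hy : (fun ω => y ω - (A - I * ω * B)) =O[𝓝[≠] 0] (fun ω => ω ^ 2))
    (hy' : (fun ω => y' ω - (A' - I * ω * B')) =O[𝓝[≠] 0] (fun ω => ω ^ 2)) :
    (fun ω => -(1 / (2 * I * ω)) * (I * ω * exp (I * ω * d) * y ω - exp (I * ω * d) * y' ω)
      - (A' / (2 * I * ω) - (1 / 2) * (A - d * A' + B'))) =O[𝓝[≠] 0] (fun ω => ω) := by
  set E := fun ω : ℂ => exp (I * ω * d)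
  have hlin : Tendsto (fun ω : ℂ => I * ω * d) (𝓝[≠] 0) (𝓝 0) := by
    have : Continuous (fun ω : ℂ => I * ω * d) := by fun_prop
    simpa using (this.tendsto 0).mono_left nhdsWithin_le_nhds
  have hsq : (fun ω : ℂ => ω ^ 2) =O[𝓝[≠] 0] (fun ω => ω) :=
    (isLittleO_pow_id one_lt_two).isBigO.mono nhdsWithin_le_nhds
  have hE2 : (fun ω => E ω - 1 - I * ω * d) =O[𝓝[≠] 0] (fun ω => ω ^ 2) :=
    (isBigO_exp_sub_one_sub_id.comp_tendsto hlin).trans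
      ((isBigO_const_mul_self (-(d : ℂ) ^ 2) (fun ω : ℂ => ω ^ 2) _).congr_left
        fun ω => by simp only [Function.comp_apply, mul_pow, I_sq]; ring)
  have hE1 : (fun ω => E ω - 1) =O[𝓝[≠] 0] (fun ω => ω) :=
    ((hE2.trans hsq).add (isBigO_const_mul_self (I * d) (fun ω : ℂ => ω) _)).congr_left
      fun ω => by ring
  have hE0 : E =O[𝓝[≠] 0] (fun _ => (1 : ℂ)) :=
    (((by fun_prop : Continuous E).tendsto 0).mono_left nhdsWithin_le_nhds).isBigO_one ℂ
  have hB : (fun ω => I * ω * B - (y ω - (A - I * ω * B))) =O[𝓝[≠] 0] (fun ω => ω) :=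
    ((isBigO_const_mul_self (I * B) (fun ω : ℂ => ω) _).congr_left fun ω => by ring).sub
      (hy.trans hsq)
  -- With `E = e^{iωd}`, `r = y - (A - iωB)` and `s = y' - (A' - iωB')`, the difference is
  -- `A' (E - 1 - iωd) / (2iω) - (A + B') (E - 1) / 2 + E s / (2iω) + E (iωB - r) / 2`.
  have hsum := ((((hE2.const_mul_left A').div_const_mul (2 * I)).sub
    (hE1.const_mul_left ((A + B') / 2))).add
    (((hE0.mul hy').congr_right fun ω => one_mul _).div_const_mul (2 * I))).add
    (((hE0.mul hB).congr_right fun ω => one_mul _).const_mul_left (1 / 2))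
  refine hsum.congr' ?_ EventuallyEq.rfl
  filter_upwards [self_mem_nhdsWithin] with ω (hω : ω ≠ 0)
  simp only [E]
  field_simp [I_ne_zero, hω]
  ring

theorem SolvesSchrodinger.deriv_ne_zero_iff_not_exists_neumann {V f f' : ℝ → ℂ} {a b : ℝ}
    (hab : a ≤ b) (hV : ContinuousOn V (Icc a b)) (hf : SolvesSchrodinger V f f')
    (hfa : f a = 1) (hfa' : f' a = 0) :
    f' b ≠ 0 ↔ ¬∃ u u' : ℝ → ℂ, (∀ x, HasDerivAt u (u' x) x) ∧
      (∀ x, HasDerivAt u' (V x * u x) x) ∧ u' a = 0 ∧ u' b = 0 ∧ ∃ x ∈ Icc a b, u x ≠ 0 := by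
  refine ⟨?_, fun h hb => h ⟨f, f', hf.hasDerivAt, hf.hasDerivAt_deriv, hfa', hb,
    a, ⟨le_rfl, hab⟩, by simp [hfa]⟩⟩
  rintro hb ⟨u, u', hu, hu', hua', hub', x, hx, hux⟩
  obtain ⟨C, hC⟩ := isCompact_Icc.exists_bound_of_continuousOn hV
  -- `u - u(a) f` has zero Cauchy data at `a`, so it vanishes on `[a, b]`.
  have hzero := ((⟨hu, hu'⟩ : SolvesSchrodinger V u u').sub
    (hf.const_mul (u a))).eq_zero_of_initial_eq_zero hC (by simp [hfa]) (by simp [hua', hfa'])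
  have hua : u a = 0 := by
    simpa [hub', hb] using (hzero b ⟨hab, le_rfl⟩).2
  exact hux (by simpa [hua] using (hzero x hx).1)

theorem transmission_coefficient_small_omega_general
    (d : ℝ) (hd : 0 < d) (q : ℝ → ℝ) (hq : Continuous q)
    (y1 y1' y2 y2' : ℂ → ℝ → ℂ)
    (hy1 : ∀ ω : ℂ, ω ≠ 0 → ∀ x, HasDerivAt (y1 ω) (y1' ω x) x)
    (hy1'' : ∀ ω : ℂ, ω ≠ 0 → ∀ x, HasDerivAt (y1' ω) (((q x : ℂ) - ω ^ 2) * y1 ω x) x)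
    (hy1d : ∀ ω : ℂ, ω ≠ 0 → y1 ω d = Complex.exp (Complex.I * ω * d))
    (hy1d' : ∀ ω : ℂ, ω ≠ 0 → y1' ω d = Complex.I * ω * Complex.exp (Complex.I * ω * d))
    (hy2 : ∀ ω : ℂ, ω ≠ 0 → ∀ x, HasDerivAt (y2 ω) (y2' ω x) x)
    (hy2'' : ∀ ω : ℂ, ω ≠ 0 → ∀ x, HasDerivAt (y2' ω) (((q x : ℂ) - ω ^ 2) * y2 ω x) x)
    (hy20 : ∀ ω : ℂ, ω ≠ 0 → y2 ω 0 = 1)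
    (hy20' : ∀ ω : ℂ, ω ≠ 0 → y2' ω 0 = -Complex.I * ω)
    (a : ℂ → ℂ)
    (ha : ∀ ω : ℂ, ω ≠ 0 →
      a ω = -(1 / (2 * Complex.I * ω)) * (y1' ω 0 * y2 ω 0 - y1 ω 0 * y2' ω 0))
    (f0 f0' f1 f1' : ℝ → ℂ)
    (hf0 : ∀ x, HasDerivAt f0 (f0' x) x)
    (hf0' : ∀ x, HasDerivAt f0' ((q x : ℂ) * f0 x) x)
    (hf00 : f0 0 = 1) (hf00' : f0' 0 = 0)
    (hf1 : ∀ x, HasDerivAt f1 (f1' x) x)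
    (hf1' : ∀ x, HasDerivAt f1' ((q x : ℂ) * f1 x) x)
    (hf10 : f1 0 = 0) (hf10' : f1' 0 = 1) :
    (fun ω : ℂ =>
        a ω - (f0' d / (2 * Complex.I * ω) - (1 / 2) * (f0 d - (d : ℂ) * f0' d + f1' d)))
      =O[𝓝[≠] 0] (fun ω : ℂ => ω) ∧
    ((∃ L : ℂ, L ≠ 0 ∧ Tendsto (fun ω : ℂ => ω * a ω) (𝓝[≠] 0) (𝓝 L)) ↔ f0' d ≠ 0) ∧
    (f0' d ≠ 0 ↔
      ¬ ∃ (u u' : ℝ → ℂ), (∀ x, HasDerivAt u (u' x) x) ∧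
        (∀ x, HasDerivAt u' ((q x : ℂ) * u x) x) ∧
        u' 0 = 0 ∧ u' d = 0 ∧ ∃ x ∈ Set.Icc 0 d, u x ≠ 0) := by
  have hV : ContinuousOn (fun x => (q x : ℂ)) (Icc 0 d) := (continuous_ofReal.comp hq).continuousOn
  have hf0s : SolvesSchrodinger (fun x => (q x : ℂ)) f0 f0' := ⟨hf0, hf0'⟩
  have hy1s (ω : ℂ) (hω : ω ≠ 0) : SolvesSchrodinger (fun x => (q x : ℂ) - ω ^ 2) (y1 ω) (y1' ω) :=
    ⟨hy1 ω hω, hy1'' ω hω⟩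
  have hy2s (ω : ℂ) (hω : ω ≠ 0) : SolvesSchrodinger (fun x => (q x : ℂ) - ω ^ 2) (y2 ω) (y2' ω) :=
    ⟨hy2 ω hω, hy2'' ω hω⟩
  obtain ⟨hy2d, hy2d'⟩ := isBigO_prod_left.mp <| isBigO_sub_of_solvesSchrodinger_sub_sq hd.le hV
    hy2s hf0s ⟨hf1, hf1'⟩ (fun ω hω => by simp [hy20 ω hω, hf00, hf10])
    (fun ω hω => by simp [hy20' ω hω, hf00', hf10'])
  have hexp : (fun ω : ℂ => a ω - (f0' d / (2 * I * ω) - (1 / 2) * (f0 d - d * f0' d + f1' d)))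
      =O[𝓝[≠] 0] (fun ω : ℂ => ω) := by
    refine (isBigO_transmission_sub d hy2d hy2d').congr' ?_ EventuallyEq.rfl
    filter_upwards [self_mem_nhdsWithin] with ω (hω : ω ≠ 0)
    rw [ha ω hω, (hy1s ω hω).wronskian_eq (hy2s ω hω) 0 d, hy1d ω hω, hy1d' ω hω]
  have hlim := tendsto_mul_of_isBigO_sub_div hexp
  refine ⟨hexp, ⟨fun ⟨L, hL, hL'⟩ h => hL ?_, fun h => ⟨_, div_ne_zero h (by simp), hlim⟩⟩,
    hf0s.deriv_ne_zero_iff_not_exists_neumann hd.le hV hf00 hf00'⟩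
  rw [tendsto_nhds_unique hL' hlim, h, zero_div]

/-- As `ω → 0` (`ω ≠ 0`), the transmission coefficient satisfies
`a(ω) = f0'(d)/(2iω) − (1/2)·(f0(d) − d·f0'(d) + f1'(d)) + O(ω)`.
In particular `a` has a simple pole at the origin (i.e. `ω·a(ω)` tends to a nonzero limit)
iff `f0'(d) ≠ 0`, iff zero is not a Neumann eigenvalue of `−d²/dx² + q` on `[0,d]`. -/
theorem transmission_coefficient_small_omega
    (d : ℝ) (hd : 0 < d) (q : ℝ → ℝ) (hq : Continuous q)
    (hqsupp : ∀ x : ℝ, x ∉ Set.Icc 0 d → q x = 0)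
    (y1 y1' y2 y2' : ℂ → ℝ → ℂ)
    (hy1 : ∀ ω : ℂ, ω ≠ 0 → ∀ x, HasDerivAt (y1 ω) (y1' ω x) x)
    (hy1'' : ∀ ω : ℂ, ω ≠ 0 → ∀ x, HasDerivAt (y1' ω) (((q x : ℂ) - ω ^ 2) * y1 ω x) x)
    (hy1d : ∀ ω : ℂ, ω ≠ 0 → y1 ω d = Complex.exp (Complex.I * ω * d))
    (hy1d' : ∀ ω : ℂ, ω ≠ 0 → y1' ω d = Complex.I * ω * Complex.exp (Complex.I * ω * d))
    (hy2 : ∀ ω : ℂ, ω ≠ 0 → ∀ x, HasDerivAt (y2 ω) (y2' ω x) x)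
    (hy2'' : ∀ ω : ℂ, ω ≠ 0 → ∀ x, HasDerivAt (y2' ω) (((q x : ℂ) - ω ^ 2) * y2 ω x) x)
    (hy20 : ∀ ω : ℂ, ω ≠ 0 → y2 ω 0 = 1)
    (hy20' : ∀ ω : ℂ, ω ≠ 0 → y2' ω 0 = -Complex.I * ω)
    (a : ℂ → ℂ)
    (ha : ∀ ω : ℂ, ω ≠ 0 →
      a ω = -(1 / (2 * Complex.I * ω)) * (y1' ω 0 * y2 ω 0 - y1 ω 0 * y2' ω 0))
    (f0 f0' f1 f1' : ℝ → ℂ)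
    (hf0 : ∀ x, HasDerivAt f0 (f0' x) x)
    (hf0' : ∀ x, HasDerivAt f0' ((q x : ℂ) * f0 x) x)
    (hf00 : f0 0 = 1) (hf00' : f0' 0 = 0)
    (hf1 : ∀ x, HasDerivAt f1 (f1' x) x)
    (hf1' : ∀ x, HasDerivAt f1' ((q x : ℂ) * f1 x) x)
    (hf10 : f1 0 = 0) (hf10' : f1' 0 = 1) :
    (fun ω : ℂ =>
        a ω - (f0' d / (2 * Complex.I * ω) - (1 / 2) * (f0 d - (d : ℂ) * f0' d + f1' d)))
      =O[𝓝[≠] 0] (fun ω : ℂ => ω) ∧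
    ((∃ L : ℂ, L ≠ 0 ∧ Tendsto (fun ω : ℂ => ω * a ω) (𝓝[≠] 0) (𝓝 L)) ↔ f0' d ≠ 0) ∧
    (f0' d ≠ 0 ↔
      ¬ ∃ (u u' : ℝ → ℂ), (∀ x, HasDerivAt u (u' x) x) ∧
        (∀ x, HasDerivAt u' ((q x : ℂ) * u x) x) ∧
        u' 0 = 0 ∧ u' d = 0 ∧ ∃ x ∈ Set.Icc 0 d, u x ≠ 0) :=
  transmission_coefficient_small_omega_general d hd q hq y1 y1' y2 y2' hy1 hy1'' hy1d hy1d' hy2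
    hy2'' hy20 hy20' a ha f0 f0' f1 f1' hf0 hf0' hf00 hf00' hf1 hf1' hf10 hf10'
end

section
/- If f0'(d) ≠ 0, then for every x ∈ ℝ the generalized eigenfunctions vanish at the origin of the spectral parameter: lim_{ω → 0⁺} y1(x,ω)/(√(2π)·a(ω)) = 0 and lim_{ω → 0⁺} y2(x,ω)/(√(2π)·a(ω)) = 0, where the limit is taken over real ω > 0. -/
open Complex Filter Topology

/-! For `0 < ω ≤ 1` the coefficient `q - ω²` is bounded uniformly in `ω`, so Grönwall's
inequality for `(y, y')` bounds the Jost solutions `y1(·,ω)`, `y2(·,ω)` locally uniformly in `ω`.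
Since `y2(0) = 1` and `y2'(0) = -iω`, one has `2iω a(ω) = -(y1'(0) + iω y1(0))`, and the
Wronskian of `y1` with `f0`, whose derivative is `-ω² y1 f0`, gives `y1'(0,ω) → -f0'(d)`.
Hence `ω a(ω) → f0'(d)/(2i) ≠ 0`, so `a` has a pole at `0` while `y1`, `y2` stay bounded. -/

theorem norm_le_mul_exp_abs_of_norm_deriv_le {E : Type*} [NormedAddCommGroup E] [NormedSpace ℝ E]
    {f f' : ℝ → E} {K : ℝ} (hf : ∀ t, HasDerivAt f (f' t) t) (bound : ∀ t, ‖f' t‖ ≤ K * ‖f t‖)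
    (s t : ℝ) : ‖f t‖ ≤ ‖f s‖ * Real.exp (K * |t - s|) := by
  have forward : ∀ {g g' : ℝ → E}, (∀ t, HasDerivAt g (g' t) t) → (∀ t, ‖g' t‖ ≤ K * ‖g t‖) →
      ∀ s t, s ≤ t → ‖g t‖ ≤ ‖g s‖ * Real.exp (K * (t - s)) := by
    intro g g' hg hbound s t hst
    rw [← gronwallBound_ε0]
    exact norm_le_gronwallBound_of_norm_deriv_right_le
      (fun u _ => (hg u).continuousAt.continuousWithinAt) (fun u _ => (hg u).hasDerivWithinAt)
      le_rfl (fun u _ => by simpa using hbound u) t ⟨hst, le_rfl⟩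
  rcases le_total s t with hst | hts
  · simpa [abs_of_nonneg (sub_nonneg.2 hst)] using forward hf bound s t hst
  · have hf_neg : ∀ u, HasDerivAt (fun u => f (-u)) (-f' (-u)) u := fun u => by
      simpa [Function.comp_def] using (hf (-u)).scomp u (hasDerivAt_neg u)
    have := forward hf_neg (fun u => by simpa using bound (-u)) (-s) (-t) (by linarith)
    simpa [abs_of_nonpos (sub_nonpos.2 hts), neg_add_eq_sub] using this

theorem norm_le_of_hasDerivAt_deriv_eq_mul {A : Type*} [NormedRing A] [NormedAlgebra ℝ A]
    {y y' c : ℝ → A} {C : ℝ} (hy : ∀ t, HasDerivAt y (y' t) t)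
    (hy' : ∀ t, HasDerivAt y' (c t * y t) t) (hc : ∀ t, ‖c t‖ ≤ C) (s t : ℝ) :
    ‖y t‖ ≤ max ‖y s‖ ‖y' s‖ * Real.exp (max 1 C * |t - s|) := by
  have bound : ∀ u, ‖(y' u, c u * y u)‖ ≤ max 1 C * ‖(y u, y' u)‖ := fun u => by
    have : ‖c u * y u‖ ≤ C * ‖y u‖ :=
      (norm_mul_le _ _).trans (mul_le_mul_of_nonneg_right (hc u) (norm_nonneg _))
    rw [Prod.norm_def, Prod.norm_def]
    exact max_le
      ((le_max_right _ _).trans (le_mul_of_one_le_left (by positivity) (le_max_left _ _)))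
      (this.trans (mul_le_mul (le_max_right _ _) (le_max_left _ _) (norm_nonneg _)
        (zero_le_one.trans (le_max_left _ _))))
  calc ‖y t‖ ≤ ‖(y t, y' t)‖ := norm_fst_le (y t, y' t)
    _ ≤ ‖(y s, y' s)‖ * Real.exp (max 1 C * |t - s|) :=
      norm_le_mul_exp_abs_of_norm_deriv_le (fun u => (hy u).prodMk (hy' u)) bound s t

theorem norm_le_exp_of_schrodinger {q : ℝ → ℝ} {C : ℝ} (hq : ∀ t, |q t| ≤ C) {ω : ℂ}
    (hω : ‖ω‖ ≤ 1) {y y' : ℝ → ℂ} (hy : ∀ t, HasDerivAt y (y' t) t)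
    (hy' : ∀ t, HasDerivAt y' (((q t : ℂ) - ω ^ 2) * y t) t) {s : ℝ} (hys : ‖y s‖ ≤ 1)
    (hys' : ‖y' s‖ ≤ 1) (t : ℝ) : ‖y t‖ ≤ Real.exp ((C + 1) * |t - s|) := by
  have hC : 0 ≤ C := (abs_nonneg _).trans (hq 0)
  have hc : ∀ u, ‖(q u : ℂ) - ω ^ 2‖ ≤ C + 1 := fun u => by
    calc ‖(q u : ℂ) - ω ^ 2‖ ≤ |q u| + ‖ω‖ ^ 2 :=
          (norm_sub_le _ _).trans_eq (by rw [norm_pow, Complex.norm_real, Real.norm_eq_abs])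
      _ ≤ C + 1 := add_le_add (hq u) (pow_le_one₀ (norm_nonneg ω) hω)
  calc ‖y t‖ ≤ max ‖y s‖ ‖y' s‖ * Real.exp (max 1 (C + 1) * |t - s|) :=
        norm_le_of_hasDerivAt_deriv_eq_mul hy hy' hc s t
    _ ≤ Real.exp ((C + 1) * |t - s|) := by
      rw [max_eq_right (show (1 : ℝ) ≤ C + 1 by linarith)]
      exact mul_le_of_le_one_left (Real.exp_nonneg _) (max_le hys hys')

theorem wronskian_sub_eq_integral {q : ℝ → ℂ} {k : ℂ} {y y' f f' : ℝ → ℂ}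
    (hy : ∀ t, HasDerivAt y (y' t) t) (hy' : ∀ t, HasDerivAt y' ((q t - k) * y t) t)
    (hf : ∀ t, HasDerivAt f (f' t) t) (hf' : ∀ t, HasDerivAt f' (q t * f t) t) (a b : ℝ) :
    (y' b * f b - y b * f' b) - (y' a * f a - y a * f' a) = -k * ∫ t in a..b, y t * f t := by
  have hW : ∀ t, HasDerivAt (fun t => y' t * f t - y t * f' t) (-k * (y t * f t)) t := fun t => by
    have : HasDerivAt (fun t => y' t * f t - y t * f' t) _ t :=
      ((hy' t).mul (hf t)).sub ((hy t).mul (hf' t))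
    convert this using 1
    ring
  have hcont : Continuous fun t => -k * (y t * f t) :=
    continuous_const.mul ((continuous_iff_continuousAt.2 fun t => (hy t).continuousAt).mul
      (continuous_iff_continuousAt.2 fun t => (hf t).continuousAt))
  rw [← intervalIntegral.integral_const_mul,
    intervalIntegral.integral_eq_sub_of_hasDerivAt (fun t _ => hW t) (hcont.intervalIntegrable a b)]

theorem tendsto_div_of_tendsto_mul {ι 𝕜 : Type*} [NormedField 𝕜] {l : Filter ι} {r y a : ι → 𝕜}
    {L : 𝕜} (hr : Tendsto r l (𝓝 0)) (hy : IsBoundedUnder (· ≤ ·) l (‖y ·‖))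
    (ha : Tendsto (fun i => r i * a i) l (𝓝 L)) (hL : L ≠ 0) :
    Tendsto (fun i => y i / a i) l (𝓝 0) := by
  have h := (hr.zero_mul_isBoundedUnder_le hy).div ha hL
  rw [zero_div] at h
  refine h.congr' ((ha.eventually_ne hL).mono fun i hi => ?_)
  exact mul_div_mul_left _ _ (left_ne_zero_of_mul hi)

theorem tendsto_ofReal_nhdsGT_zero : Tendsto (fun ω : ℝ => (ω : ℂ)) (𝓝[>] 0) (𝓝 0) :=
  tendsto_nhdsWithin_of_tendsto_nhds (by simpa using continuous_ofReal.tendsto 0)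

theorem eventually_norm_le_of_schrodinger {q : ℝ → ℝ} {C s : ℝ} (hq : ∀ t, |q t| ≤ C)
    {y y' : ℂ → ℝ → ℂ} (hy : ∀ ω : ℂ, ω ≠ 0 → ∀ x, HasDerivAt (y ω) (y' ω x) x)
    (hy' : ∀ ω : ℂ, ω ≠ 0 → ∀ x, HasDerivAt (y' ω) (((q x : ℂ) - ω ^ 2) * y ω x) x)
    (hs : ∀ ω : ℝ, 0 < ω → ‖y ω s‖ ≤ 1 ∧ ‖y' ω s‖ ≤ ω) :
    ∀ᶠ ω : ℝ in 𝓝[>] 0, ∀ t, ‖y ω t‖ ≤ Real.exp ((C + 1) * |t - s|) := by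
  filter_upwards [Ioc_mem_nhdsGT one_pos] with ω hω t
  have hω0 : (ω : ℂ) ≠ 0 := ofReal_ne_zero.2 hω.1.ne'
  obtain ⟨hys, hys'⟩ := hs ω hω.1
  exact norm_le_exp_of_schrodinger hq (by simpa [abs_of_pos hω.1] using hω.2) (hy _ hω0)
    (hy' _ hω0) hys (hys'.trans hω.2) t

theorem tendsto_jost_deriv_zero {q : ℝ → ℝ} {d : ℝ} {g : ℝ → ℝ} {y y' : ℂ → ℝ → ℂ} {f f' : ℝ → ℂ}
    (hy : ∀ ω : ℂ, ω ≠ 0 → ∀ x, HasDerivAt (y ω) (y' ω x) x)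
    (hy' : ∀ ω : ℂ, ω ≠ 0 → ∀ x, HasDerivAt (y' ω) (((q x : ℂ) - ω ^ 2) * y ω x) x)
    (hyd : ∀ ω : ℂ, ω ≠ 0 → y ω d = exp (I * ω * d))
    (hyd' : ∀ ω : ℂ, ω ≠ 0 → y' ω d = I * ω * exp (I * ω * d))
    (hf : ∀ x, HasDerivAt f (f' x) x) (hf' : ∀ x, HasDerivAt f' ((q x : ℂ) * f x) x)
    (hf0 : f 0 = 1) (hf0' : f' 0 = 0) (hg : Continuous g)
    (hyg : ∀ᶠ ω : ℝ in 𝓝[>] 0, ∀ t, ‖y ω t‖ ≤ g t) :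
    Tendsto (fun ω : ℝ => y' ω 0) (𝓝[>] 0) (𝓝 (-f' d)) := by
  have hf_cont : Continuous f := continuous_iff_continuousAt.2 fun t => (hf t).continuousAt
  obtain ⟨M, hM⟩ := (isCompact_uIcc (a := (0 : ℝ)) (b := d)).exists_bound_of_continuousOn
    (hg.mul hf_cont.norm).continuousOn
  have hW : ∀ ω : ℝ, 0 < ω → y' ω 0 = (I * ω * exp (I * ω * d) * f d - exp (I * ω * d) * f' d)
      + (ω : ℂ) ^ 2 * ∫ t in (0 : ℝ)..d, y ω t * f t := fun ω hω => by
    have hω0 : (ω : ℂ) ≠ 0 := ofReal_ne_zero.2 hω.ne'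
    have := wronskian_sub_eq_integral (hy _ hω0) (hy' _ hω0) hf hf' 0 d
    rw [hyd _ hω0, hyd' _ hω0, hf0, hf0'] at this
    linear_combination -this
  have hboundary : Tendsto (fun ω : ℝ => I * ω * exp (I * ω * d) * f d - exp (I * ω * d) * f' d)
      (𝓝[>] 0) (𝓝 (-f' d)) := by
    refine tendsto_nhdsWithin_of_tendsto_nhds ?_
    convert (Continuous.tendsto (by fun_prop) 0 :
      Tendsto (fun ω : ℝ => I * ω * exp (I * ω * d) * f d - exp (I * ω * d) * f' d) _ _) using 2
    simp
  have hintegral : Tendsto (fun ω : ℝ => (ω : ℂ) ^ 2 * ∫ t in (0 : ℝ)..d, y ω t * f t)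
      (𝓝[>] 0) (𝓝 0) := by
    refine Tendsto.zero_mul_isBoundedUnder_le (by simpa using tendsto_ofReal_nhdsGT_zero.pow 2)
      (isBoundedUnder_of_eventually_le (a := M * |d - 0|) (hyg.mono fun ω hω =>
        intervalIntegral.norm_integral_le_of_norm_le_const fun t ht => ?_))
    have hMt := hM t (Set.uIoc_subset_uIcc ht)
    rw [norm_mul]
    calc ‖y ω t‖ * ‖f t‖ ≤ g t * ‖f t‖ := mul_le_mul_of_nonneg_right (hω t) (norm_nonneg _)
      _ ≤ M := (le_abs_self _).trans (by simpa using hMt)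
  have := (hboundary.add hintegral).congr'
    (eventually_mem_nhdsWithin.mono fun ω hω => (hW ω hω).symm)
  rwa [add_zero] at this

theorem tendsto_mul_transmission_coeff {y1 y1' y2 y2' : ℂ → ℝ → ℂ} {a : ℂ → ℂ} {L : ℂ} {B : ℝ}
    (hy20 : ∀ ω : ℂ, ω ≠ 0 → y2 ω 0 = 1) (hy20' : ∀ ω : ℂ, ω ≠ 0 → y2' ω 0 = -I * ω)
    (ha : ∀ ω : ℂ, ω ≠ 0 →
      a ω = -(1 / (2 * I * ω)) * (y1' ω 0 * y2 ω 0 - y1 ω 0 * y2' ω 0))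
    (hy1' : Tendsto (fun ω : ℝ => y1' ω 0) (𝓝[>] 0) (𝓝 L))
    (hy1 : ∀ᶠ ω : ℝ in 𝓝[>] 0, ‖y1 ω 0‖ ≤ B) :
    Tendsto (fun ω : ℝ => (ω : ℂ) * a ω) (𝓝[>] 0) (𝓝 (-L / (2 * I))) := by
  have hy1_small : Tendsto (fun ω : ℝ => (ω : ℂ) * y1 ω 0) (𝓝[>] 0) (𝓝 0) :=
    tendsto_ofReal_nhdsGT_zero.zero_mul_isBoundedUnder_le (isBoundedUnder_of_eventually_le hy1)
  have := (hy1'.add (hy1_small.const_mul I)).div_const (-(2 * I))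
  rw [mul_zero, add_zero, div_neg, ← neg_div] at this
  refine this.congr' (eventually_mem_nhdsWithin.mono fun ω hω => ?_)
  have hω0 : (ω : ℂ) ≠ 0 := ofReal_ne_zero.2 (ne_of_gt hω)
  dsimp only
  rw [ha _ hω0, hy20 _ hω0, hy20' _ hω0]
  field_simp
  ring

theorem generalized_eigenfunctions_vanish_at_zero_general
    (d : ℝ) (q : ℝ → ℝ) (hq : Continuous q)
    (hqsupp : ∀ x : ℝ, x ∉ Set.Icc 0 d → q x = 0)
    (y1 y1' y2 y2' : ℂ → ℝ → ℂ)
    (hy1 : ∀ ω : ℂ, ω ≠ 0 → ∀ x, HasDerivAt (y1 ω) (y1' ω x) x)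
    (hy1'' : ∀ ω : ℂ, ω ≠ 0 → ∀ x, HasDerivAt (y1' ω) (((q x : ℂ) - ω ^ 2) * y1 ω x) x)
    (hy1d : ∀ ω : ℂ, ω ≠ 0 → y1 ω d = Complex.exp (Complex.I * ω * d))
    (hy1d' : ∀ ω : ℂ, ω ≠ 0 → y1' ω d = Complex.I * ω * Complex.exp (Complex.I * ω * d))
    (hy2 : ∀ ω : ℂ, ω ≠ 0 → ∀ x, HasDerivAt (y2 ω) (y2' ω x) x)
    (hy2'' : ∀ ω : ℂ, ω ≠ 0 → ∀ x, HasDerivAt (y2' ω) (((q x : ℂ) - ω ^ 2) * y2 ω x) x)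
    (hy20 : ∀ ω : ℂ, ω ≠ 0 → y2 ω 0 = 1)
    (hy20' : ∀ ω : ℂ, ω ≠ 0 → y2' ω 0 = -Complex.I * ω)
    (a : ℂ → ℂ)
    (ha : ∀ ω : ℂ, ω ≠ 0 →
      a ω = -(1 / (2 * Complex.I * ω)) * (y1' ω 0 * y2 ω 0 - y1 ω 0 * y2' ω 0))
    (f0 f0' : ℝ → ℂ)
    (hf0 : ∀ x, HasDerivAt f0 (f0' x) x)
    (hf0' : ∀ x, HasDerivAt f0' ((q x : ℂ) * f0 x) x)
    (hf00 : f0 0 = 1) (hf00' : f0' 0 = 0)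
    (hf0d : f0' d ≠ 0) :
    ∀ x : ℝ,
      Tendsto (fun ω : ℝ => y1 (ω : ℂ) x / ((Real.sqrt (2 * Real.pi) : ℂ) * a (ω : ℂ)))
        (𝓝[>] 0) (𝓝 0) ∧
      Tendsto (fun ω : ℝ => y2 (ω : ℂ) x / ((Real.sqrt (2 * Real.pi) : ℂ) * a (ω : ℂ)))
        (𝓝[>] 0) (𝓝 0) := by
  obtain ⟨C, hC⟩ : ∃ C, ∀ t, |q t| ≤ C := by
    simpa using hq.bounded_above_of_compact_support (HasCompactSupport.intro isCompact_Icc hqsupp)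
  have hy1_le := eventually_norm_le_of_schrodinger hC hy1 hy1'' (s := d) fun ω hω => by
    have hω0 : (ω : ℂ) ≠ 0 := ofReal_ne_zero.2 hω.ne'
    simp [hy1d _ hω0, hy1d' _ hω0, norm_exp, abs_of_pos hω]
  have hy2_le := eventually_norm_le_of_schrodinger hC hy2 hy2'' (s := 0) fun ω hω => by
    have hω0 : (ω : ℂ) ≠ 0 := ofReal_ne_zero.2 hω.ne'
    simp [hy20 _ hω0, hy20' _ hω0, abs_of_pos hω]
  have hy1'_lim := tendsto_jost_deriv_zero hy1 hy1'' hy1d hy1d' hf0 hf0' hf00 hf00'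
    (by fun_prop) hy1_le
  have hωa := tendsto_mul_transmission_coeff hy20 hy20' ha hy1'_lim (hy1_le.mono fun _ h => h 0)
  rw [neg_neg] at hωa
  have hωa' := hωa.const_mul (Real.sqrt (2 * Real.pi) : ℂ)
  simp only [mul_left_comm _ (_ : ℂ) (a _)] at hωa'
  have hL : (Real.sqrt (2 * Real.pi) : ℂ) * (f0' d / (2 * I)) ≠ 0 :=
    mul_ne_zero (ofReal_ne_zero.2 (by positivity)) (div_ne_zero hf0d (by simp))
  intro x
  exact ⟨tendsto_div_of_tendsto_mul tendsto_ofReal_nhdsGT_zero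
      (isBoundedUnder_of_eventually_le (hy1_le.mono fun _ h => h x)) hωa' hL,
    tendsto_div_of_tendsto_mul tendsto_ofReal_nhdsGT_zero
      (isBoundedUnder_of_eventually_le (hy2_le.mono fun _ h => h x)) hωa' hL⟩

/-- If `f0'(d) ≠ 0`, then for every `x`,
`lim_{ω → 0⁺} y1(x,ω)/(√(2π)·a(ω)) = 0` and `lim_{ω → 0⁺} y2(x,ω)/(√(2π)·a(ω)) = 0`,
where the limit is taken over real `ω > 0`. -/
theorem generalized_eigenfunctions_vanish_at_zero
    (d : ℝ) (hd : 0 < d) (q : ℝ → ℝ) (hq : Continuous q)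
    (hqsupp : ∀ x : ℝ, x ∉ Set.Icc 0 d → q x = 0)
    (y1 y1' y2 y2' : ℂ → ℝ → ℂ)
    (hy1 : ∀ ω : ℂ, ω ≠ 0 → ∀ x, HasDerivAt (y1 ω) (y1' ω x) x)
    (hy1'' : ∀ ω : ℂ, ω ≠ 0 → ∀ x, HasDerivAt (y1' ω) (((q x : ℂ) - ω ^ 2) * y1 ω x) x)
    (hy1d : ∀ ω : ℂ, ω ≠ 0 → y1 ω d = Complex.exp (Complex.I * ω * d))
    (hy1d' : ∀ ω : ℂ, ω ≠ 0 → y1' ω d = Complex.I * ω * Complex.exp (Complex.I * ω * d))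
    (hy2 : ∀ ω : ℂ, ω ≠ 0 → ∀ x, HasDerivAt (y2 ω) (y2' ω x) x)
    (hy2'' : ∀ ω : ℂ, ω ≠ 0 → ∀ x, HasDerivAt (y2' ω) (((q x : ℂ) - ω ^ 2) * y2 ω x) x)
    (hy20 : ∀ ω : ℂ, ω ≠ 0 → y2 ω 0 = 1)
    (hy20' : ∀ ω : ℂ, ω ≠ 0 → y2' ω 0 = -Complex.I * ω)
    (a : ℂ → ℂ)
    (ha : ∀ ω : ℂ, ω ≠ 0 →
      a ω = -(1 / (2 * Complex.I * ω)) * (y1' ω 0 * y2 ω 0 - y1 ω 0 * y2' ω 0))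
    (f0 f0' : ℝ → ℂ)
    (hf0 : ∀ x, HasDerivAt f0 (f0' x) x)
    (hf0' : ∀ x, HasDerivAt f0' ((q x : ℂ) * f0 x) x)
    (hf00 : f0 0 = 1) (hf00' : f0' 0 = 0)
    (hf0d : f0' d ≠ 0) :
    ∀ x : ℝ,
      Tendsto (fun ω : ℝ => y1 (ω : ℂ) x / ((Real.sqrt (2 * Real.pi) : ℂ) * a (ω : ℂ)))
        (𝓝[>] 0) (𝓝 0) ∧
      Tendsto (fun ω : ℝ => y2 (ω : ℂ) x / ((Real.sqrt (2 * Real.pi) : ℂ) * a (ω : ℂ)))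
        (𝓝[>] 0) (𝓝 0) :=
  generalized_eigenfunctions_vanish_at_zero_general d q hq hqsupp y1 y1' y2 y2' hy1 hy1'' hy1d hy1d'
    hy2 hy2'' hy20 hy20' a ha f0 f0' hf0 hf0' hf00 hf00' hf0d
end

section
/- If f0'(d) = 0, then for every x ∈ ℝ: lim_{ω → 0⁺} y1(x,ω)/(√(2π)·a(ω)) = −√(2/π)·f0(x)/(f0(d)² + 1) and lim_{ω → 0⁺} y2(x,ω)/(√(2π)·a(ω)) = −√(2/π)·f0(x)·f0(d)/(f0(d)² + 1), where the limits are taken over real ω > 0. -/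
/-! As `ω → 0⁺` the potential `q - ω²` tends to `q`, so by Gronwall's inequality (continuous
dependence on parameters and initial data) `y2(·, ω) → f0`, and, since the data of `y1` at `d`
tend to `(1, 0) = (f0 d, f0' d) / f0 d` in the Neumann case, `y1(·, ω) → f0 / f0 d`; here
`f0 d ≠ 0` by uniqueness of solutions. Comparing the Wronskian of `y1` and `f0` at `0` and `d`
gives `y1'(0, ω) = i ω f0(d) e^{iωd} + ω² ∫₀ᵈ f0 y1`, hence
`a(ω) → -(f0(d)² + 1) / (2 f0(d))`, which is nonzero because `f0` is real-valued. -/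

open Complex Filter Topology Asymptotics Set ComplexConjugate

theorem norm_le_gronwallBound_of_norm_deriv_le_uIcc {E : Type*} [NormedAddCommGroup E]
    [NormedSpace ℝ E] {f f' : ℝ → E} {K ε t₀ x : ℝ}
    (hf : ∀ t ∈ uIcc t₀ x, HasDerivAt f (f' t) t)
    (bound : ∀ t ∈ uIcc t₀ x, ‖f' t‖ ≤ K * ‖f t‖ + ε) :
    ‖f x‖ ≤ gronwallBound ‖f t₀‖ K ε |x - t₀| := by
  rcases le_total t₀ x with h | h
  · rw [uIcc_of_le h] at hf bound
    rw [abs_of_nonneg (sub_nonneg.2 h)]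
    exact norm_le_gronwallBound_of_norm_deriv_right_le (HasDerivAt.continuousOn hf)
      (fun t ht => (hf t (Ico_subset_Icc_self ht)).hasDerivWithinAt) le_rfl
      (fun t ht => bound t (Ico_subset_Icc_self ht)) x ⟨h, le_rfl⟩
  · -- reverse time: apply the forward estimate to `s ↦ f (-s)`
    rw [uIcc_of_ge h] at hf bound
    have mem : ∀ s ∈ Icc (-t₀) (-x), -s ∈ Icc x t₀ := fun s hs =>
      ⟨le_neg.1 hs.2, neg_le.1 hs.1⟩
    have hg : ∀ s ∈ Icc (-t₀) (-x), HasDerivAt (fun s => f (-s)) (-f' (-s)) s := fun s hs =>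
      ((hf (-s) (mem s hs)).scomp s (hasDerivAt_neg s)).congr_deriv (by simp)
    have := norm_le_gronwallBound_of_norm_deriv_right_le (HasDerivAt.continuousOn hg)
      (fun s hs => (hg s (Ico_subset_Icc_self hs)).hasDerivWithinAt) le_rfl
      (fun s hs => by simpa using bound (-s) (mem s (Ico_subset_Icc_self hs))) (-x)
      ⟨neg_le_neg h, le_rfl⟩
    simpa [abs_of_nonpos (sub_nonpos.2 h), neg_add_eq_sub] using this

theorem max_norm_le_gronwallBound_of_second_deriv {E : Type*} [NormedAddCommGroup E]
    [NormedSpace ℝ E] {y y' f : ℝ → E} {K ε t₀ x : ℝ} (hK : 1 ≤ K) (hε : 0 ≤ ε)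
    (hy : ∀ t ∈ uIcc t₀ x, HasDerivAt y (y' t) t) (hy' : ∀ t ∈ uIcc t₀ x, HasDerivAt y' (f t) t)
    (bound : ∀ t ∈ uIcc t₀ x, ‖f t‖ ≤ K * max ‖y t‖ ‖y' t‖ + ε) :
    max ‖y x‖ ‖y' x‖ ≤ gronwallBound (max ‖y t₀‖ ‖y' t₀‖) K ε |x - t₀| :=
  norm_le_gronwallBound_of_norm_deriv_le_uIcc (f := fun t => (y t, y' t))
    (fun t ht => (hy t ht).prodMk (hy' t ht)) fun t ht => by
      rw [Prod.norm_def, Prod.norm_def]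
      exact max_le (by nlinarith [le_max_right ‖y t‖ ‖y' t‖, norm_nonneg (y' t)]) (bound t ht)

theorem exists_one_le_bound_of_continuousOn_uIcc {E : Type*} [SeminormedAddCommGroup E]
    {P : ℝ → E} {a b : ℝ} (hP : ContinuousOn P (uIcc a b)) :
    ∃ K, 1 ≤ K ∧ ∀ t ∈ uIcc a b, ‖P t‖ ≤ K := by
  obtain ⟨K, hK⟩ := isCompact_uIcc.exists_bound_of_continuousOn hP
  exact ⟨max K 1, le_max_right _ _, fun t ht => (hK t ht).trans (le_max_left _ _)⟩

def SolvesLinearODE (P y y' : ℝ → ℂ) : Prop :=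
  ∀ t, HasDerivAt y (y' t) t ∧ HasDerivAt y' (P t * y t) t

namespace SolvesLinearODE

variable {P y y' : ℝ → ℂ}

theorem max_norm_le (h : SolvesLinearODE P y y') {K t₀ x : ℝ} (hK : 1 ≤ K)
    (hP : ∀ t ∈ uIcc t₀ x, ‖P t‖ ≤ K) :
    max ‖y x‖ ‖y' x‖ ≤ max ‖y t₀‖ ‖y' t₀‖ * Real.exp (K * |x - t₀|) := by
  have := max_norm_le_gronwallBound_of_second_deriv hK le_rfl (fun t _ => (h t).1)
    (fun t _ => (h t).2) fun t ht => by
      rw [norm_mul, add_zero]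
      exact mul_le_mul (hP t ht) (le_max_left _ _) (norm_nonneg _) (by linarith)
  rwa [gronwallBound_ε0] at this

theorem eq_zero_of_eq_zero (h : SolvesLinearODE P y y') {t₀ x : ℝ}
    (hP : ContinuousOn P (uIcc t₀ x)) (h₀ : y t₀ = 0) (h₀' : y' t₀ = 0) : y x = 0 := by
  obtain ⟨K, hK, hPK⟩ := exists_one_le_bound_of_continuousOn_uIcc hP
  have := h.max_norm_le hK hPK
  simp only [h₀, h₀', norm_zero, max_self, zero_mul] at this
  exact norm_le_zero_iff.1 ((le_max_left _ _).trans this)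

theorem sub (h₁ : SolvesLinearODE P y y') {z z' : ℝ → ℂ} (h₂ : SolvesLinearODE P z z') :
    SolvesLinearODE P (y - z) (y' - z') := fun t =>
  ⟨(h₁ t).1.sub (h₂ t).1, ((h₁ t).2.sub (h₂ t).2).congr_deriv (by simp [mul_sub])⟩

theorem conj_eq (h : SolvesLinearODE P y y') (hPc : Continuous P) (hP : ∀ t, conj (P t) = P t)
    {t₀ : ℝ} (h₀ : conj (y t₀) = y t₀) (h₀' : conj (y' t₀) = y' t₀) (x : ℝ) :
    conj (y x) = y x := by
  have hconj : SolvesLinearODE P (fun t => conj (y t)) (fun t => conj (y' t)) := fun t =>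
    ⟨(h t).1.star, (h t).2.star.congr_deriv (by simp [hP])⟩
  exact sub_eq_zero.1 <| (hconj.sub h).eq_zero_of_eq_zero hPc.continuousOn (t₀ := t₀)
    (by simp [h₀]) (by simp [h₀'])

theorem norm_sub_le_gronwallBound {Q z z' : ℝ → ℂ} {c : ℂ}
    (hy : SolvesLinearODE (fun t => Q t - c) y y') (hz : SolvesLinearODE Q z z') {K B t₀ x : ℝ}
    (hK : 1 ≤ K) (hQ : ∀ t ∈ uIcc t₀ x, ‖Q t‖ ≤ K) (hB : ∀ t ∈ uIcc t₀ x, ‖y t‖ ≤ B) :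
    ‖y x - z x‖ ≤
      gronwallBound (max ‖y t₀ - z t₀‖ ‖y' t₀ - z' t₀‖) K (‖c‖ * B) |x - t₀| := by
  have hB₀ : 0 ≤ B := (norm_nonneg _).trans (hB t₀ left_mem_uIcc)
  refine (le_max_left _ _).trans <| max_norm_le_gronwallBound_of_second_deriv hK (by positivity)
    (fun t _ => (hy t).1.sub (hz t).1) (f := fun t => Q t * (y t - z t) - c * y t)
    (fun t _ => ((hy t).2.sub (hz t).2).congr_deriv (by ring)) fun t ht => ?_
  calc ‖Q t * (y t - z t) - c * y t‖ ≤ K * ‖y t - z t‖ + ‖c‖ * B := by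
        refine (norm_sub_le _ _).trans (add_le_add ?_ ?_) <;> rw [norm_mul]
        · exact mul_le_mul_of_nonneg_right (hQ t ht) (norm_nonneg _)
        · exact mul_le_mul_of_nonneg_left (hB t ht) (norm_nonneg _)
    _ ≤ K * max ‖y t - z t‖ ‖y' t - z' t‖ + ‖c‖ * B := by gcongr; exact le_max_left _ _

theorem wronskian_sub_eq_integral {Q z z' : ℝ → ℂ} {c : ℂ}
    (hy : SolvesLinearODE (fun t => Q t - c) y y') (hz : SolvesLinearODE Q z z') (a b : ℝ) :
    (z b * y' b - z' b * y b) - (z a * y' a - z' a * y a) = -c * ∫ t in a..b, z t * y t := by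
  have hcont : Continuous fun t => z t * y t :=
    continuous_iff_continuousAt.2 fun t => ((hz t).1.mul (hy t).1).continuousAt
  rw [← intervalIntegral.integral_const_mul, intervalIntegral.integral_eq_sub_of_hasDerivAt
    (f := fun t => z t * y' t - z' t * y t) (f' := fun t => -c * (z t * y t))
    (fun t _ => ((hz t).1.mul (hy t).2).sub ((hz t).2.mul (hy t).1) |>.congr_deriv (by ring))
    ((continuous_const.mul hcont).intervalIntegrable _ _)]

end SolvesLinearODE

theorem tendsto_gronwallBound_zero {ι : Type*} {l : Filter ι} {δ ε : ι → ℝ}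
    (hδ : Tendsto δ l (𝓝 0)) (hε : Tendsto ε l (𝓝 0)) (K x : ℝ) :
    Tendsto (fun i => gronwallBound (δ i) K (ε i) x) l (𝓝 0) := by
  by_cases hK : K = 0
  · subst hK
    simpa [gronwallBound_K0] using hδ.add (hε.mul_const x)
  · simp only [gronwallBound_of_K_ne_0 hK]
    simpa using (hδ.mul_const _).add ((hε.div_const K).mul_const _)

section ContinuousDependence

variable {ι : Type*} {l : Filter ι} {Q : ℝ → ℂ} {c : ι → ℂ} {y y' : ι → ℝ → ℂ} {t₀ x : ℝ}

theorem exists_eventually_norm_le_of_tendsto_initial (hQ : ContinuousOn Q (uIcc t₀ x))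
    (hc : Tendsto c l (𝓝 0)) (hy : ∀ᶠ i in l, SolvesLinearODE (fun t => Q t - c i) (y i) (y' i))
    {u u' : ℂ} (h₀ : Tendsto (fun i => y i t₀) l (𝓝 u))
    (h₀' : Tendsto (fun i => y' i t₀) l (𝓝 u')) :
    ∃ B, ∀ᶠ i in l, ∀ t ∈ uIcc t₀ x, ‖y i t‖ ≤ B := by
  obtain ⟨K, hK, hQK⟩ := exists_one_le_bound_of_continuousOn_uIcc hQ
  set R := max ‖u‖ ‖u'‖ + 1
  refine ⟨R * Real.exp ((K + 1) * |x - t₀|), ?_⟩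
  have hc₁ := (tendsto_zero_iff_norm_tendsto_zero.1 hc).eventually (gt_mem_nhds one_pos)
  have hR := h₀.norm.eventually (gt_mem_nhds ((le_max_left ‖u‖ ‖u'‖).trans_lt (lt_add_one _)))
  have hR' := h₀'.norm.eventually (gt_mem_nhds ((le_max_right ‖u‖ ‖u'‖).trans_lt (lt_add_one _)))
  filter_upwards [hy, hc₁, hR, hR'] with i hyi hci hRi hRi' t ht
  have hbound : ∀ s ∈ uIcc t₀ t, ‖Q s - c i‖ ≤ K + 1 := fun s hs =>
    (norm_sub_le _ _).trans (add_le_add (hQK s (uIcc_subset_uIcc_left ht hs)) hci.le)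
  calc ‖y i t‖ ≤ max ‖y i t‖ ‖y' i t‖ := le_max_left _ _
    _ ≤ max ‖y i t₀‖ ‖y' i t₀‖ * Real.exp ((K + 1) * |t - t₀|) :=
      hyi.max_norm_le (by linarith) hbound
    _ ≤ R * Real.exp ((K + 1) * |x - t₀|) := by
      gcongr ?_ * Real.exp (_ * ?_)
      · exact max_le hRi.le hRi'.le
      · exact abs_sub_left_of_mem_uIcc ht

theorem tendsto_of_tendsto_initial (hQ : ContinuousOn Q (uIcc t₀ x)) (hc : Tendsto c l (𝓝 0))
    (hy : ∀ᶠ i in l, SolvesLinearODE (fun t => Q t - c i) (y i) (y' i)) {z z' : ℝ → ℂ}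
    (hz : SolvesLinearODE Q z z') (h₀ : Tendsto (fun i => y i t₀) l (𝓝 (z t₀)))
    (h₀' : Tendsto (fun i => y' i t₀) l (𝓝 (z' t₀))) :
    Tendsto (fun i => y i x) l (𝓝 (z x)) := by
  obtain ⟨K, hK, hQK⟩ := exists_one_le_bound_of_continuousOn_uIcc hQ
  obtain ⟨B, hB⟩ := exists_eventually_norm_le_of_tendsto_initial hQ hc hy h₀ h₀'
  have hδ : Tendsto (fun i => max ‖y i t₀ - z t₀‖ ‖y' i t₀ - z' t₀‖) l (𝓝 0) := by
    simpa using (h₀.sub_const (z t₀)).norm.max (h₀'.sub_const (z' t₀)).norm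
  have hε : Tendsto (fun i => ‖c i‖ * B) l (𝓝 0) := by simpa using hc.norm.mul_const B
  refine tendsto_sub_nhds_zero_iff.1 <|
    squeeze_zero_norm' ?_ (tendsto_gronwallBound_zero hδ hε K |x - t₀|)
  filter_upwards [hy, hB] with i hyi hBi
  exact hyi.norm_sub_le_gronwallBound hz hK hQK hBi

end ContinuousDependence

theorem tendsto_div_sqrt_two_pi_mul {ι : Type*} {l : Filter ι} {f a : ι → ℂ} {u v : ℂ}
    (hf : Tendsto f l (𝓝 u)) (ha : Tendsto a l (𝓝 (-(v ^ 2 + 1) / (2 * v)))) (hv : v ≠ 0)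
    (hv' : v ^ 2 + 1 ≠ 0) :
    Tendsto (fun i => f i / ((Real.sqrt (2 * Real.pi) : ℂ) * a i)) l
      (𝓝 (-(Real.sqrt (2 / Real.pi) : ℂ) * u * v / (v ^ 2 + 1))) := by
  have hsqrt : (Real.sqrt (2 / Real.pi) : ℂ) * Real.sqrt (2 * Real.pi) = 2 := by
    rw [← ofReal_mul, ← Real.sqrt_mul (by positivity),
      show 2 / Real.pi * (2 * Real.pi) = 2 ^ 2 by field_simp, Real.sqrt_sq zero_le_two]
    norm_num
  have hsqrt₀ : (Real.sqrt (2 * Real.pi) : ℂ) ≠ 0 := ofReal_ne_zero.2 (by positivity)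
  have hlim : u / (Real.sqrt (2 * Real.pi) * (-(v ^ 2 + 1) / (2 * v))) =
      -(Real.sqrt (2 / Real.pi) : ℂ) * u * v / (v ^ 2 + 1) := by
    field_simp
    linear_combination u * hsqrt
  rw [← hlim]
  exact hf.div (tendsto_const_nhds.mul ha) <|
    mul_ne_zero hsqrt₀ (div_ne_zero (neg_ne_zero.2 hv') (mul_ne_zero two_ne_zero hv))

theorem tendsto_ofReal_sq_nhdsGT_zero : Tendsto (fun w : ℝ => (w : ℂ) ^ 2) (𝓝[>] 0) (𝓝 0) :=
  ((by fun_prop : Continuous fun w : ℝ => (w : ℂ) ^ 2).tendsto' 0 0 (by simp)).mono_left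
    nhdsWithin_le_nhds

section Jost

variable {q : ℝ → ℝ} {d : ℝ} {y y' : ℂ → ℝ → ℂ} {f0 f0' : ℝ → ℂ}

theorem tendsto_jost_right_initial (hyd : ∀ᶠ w : ℝ in 𝓝[>] 0, y w d = exp (I * w * d))
    (hyd' : ∀ᶠ w : ℝ in 𝓝[>] 0, y' w d = I * w * exp (I * w * d)) :
    Tendsto (fun w : ℝ => y w d) (𝓝[>] 0) (𝓝 1) ∧
      Tendsto (fun w : ℝ => y' w d) (𝓝[>] 0) (𝓝 0) := by
  have hc : Continuous fun w : ℝ => exp (I * w * d) := by fun_prop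
  have hc' : Continuous fun w : ℝ => I * w * exp (I * w * d) := by fun_prop
  constructor
  · refine Tendsto.congr' (hyd.mono fun _ h => h.symm) ?_
    simpa using (hc.tendsto 0).mono_left nhdsWithin_le_nhds
  · refine Tendsto.congr' (hyd'.mono fun _ h => h.symm) ?_
    simpa using (hc'.tendsto 0).mono_left nhdsWithin_le_nhds

theorem tendsto_jost_right (hq : Continuous q)
    (hy : ∀ᶠ w : ℝ in 𝓝[>] 0, SolvesLinearODE (fun t => q t - (w : ℂ) ^ 2) (y w) (y' w))
    (hyd : ∀ᶠ w : ℝ in 𝓝[>] 0, y w d = exp (I * w * d))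
    (hyd' : ∀ᶠ w : ℝ in 𝓝[>] 0, y' w d = I * w * exp (I * w * d))
    (hf0 : SolvesLinearODE (fun t => q t) f0 f0') (hf0d : f0' d = 0) (hf0d_ne : f0 d ≠ 0)
    (x : ℝ) : Tendsto (fun w : ℝ => y w x) (𝓝[>] 0) (𝓝 (f0 x / f0 d)) := by
  obtain ⟨h₀, h₀'⟩ := tendsto_jost_right_initial hyd hyd'
  have hz : SolvesLinearODE (fun t => q t) (fun t => f0 t / f0 d) (fun t => f0' t / f0 d) :=
    fun t => ⟨(hf0 t).1.div_const _, ((hf0 t).2.div_const _).congr_deriv (mul_div_assoc _ _ _)⟩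
  exact tendsto_of_tendsto_initial (continuous_ofReal.comp hq).continuousOn
    tendsto_ofReal_sq_nhdsGT_zero hy hz (by rwa [div_self hf0d_ne]) (by rwa [hf0d, zero_div])

theorem tendsto_jost_left (hq : Continuous q)
    (hy : ∀ᶠ w : ℝ in 𝓝[>] 0, SolvesLinearODE (fun t => q t - (w : ℂ) ^ 2) (y w) (y' w))
    (hy₀ : ∀ᶠ w : ℝ in 𝓝[>] 0, y w 0 = 1) (hy₀' : ∀ᶠ w : ℝ in 𝓝[>] 0, y' w 0 = -I * w)
    (hf0 : SolvesLinearODE (fun t => q t) f0 f0') (hf00 : f0 0 = 1) (hf00' : f0' 0 = 0)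
    (x : ℝ) : Tendsto (fun w : ℝ => y w x) (𝓝[>] 0) (𝓝 (f0 x)) := by
  have h₀' : Tendsto (fun w : ℝ => -I * w) (𝓝[>] 0) (𝓝 (f0' 0)) :=
    ((by fun_prop : Continuous fun w : ℝ => -I * w).tendsto' 0 _ (by simp [hf00'])).mono_left
      nhdsWithin_le_nhds
  exact tendsto_of_tendsto_initial (continuous_ofReal.comp hq).continuousOn
    tendsto_ofReal_sq_nhdsGT_zero hy hf0
    (tendsto_const_nhds.congr' (hy₀.mono fun _ h => hf00.trans h.symm))
    (h₀'.congr' (hy₀'.mono fun _ h => h.symm))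

theorem tendsto_transmission_coeff (hq : Continuous q)
    (hy : ∀ᶠ w : ℝ in 𝓝[>] 0, SolvesLinearODE (fun t => q t - (w : ℂ) ^ 2) (y w) (y' w))
    (hyd : ∀ᶠ w : ℝ in 𝓝[>] 0, y w d = exp (I * w * d))
    (hyd' : ∀ᶠ w : ℝ in 𝓝[>] 0, y' w d = I * w * exp (I * w * d))
    (hf0 : SolvesLinearODE (fun t => q t) f0 f0') (hf00 : f0 0 = 1) (hf00' : f0' 0 = 0)
    (hf0d : f0' d = 0) (hf0d_ne : f0 d ≠ 0) :
    Tendsto (fun w : ℝ => -(1 / (2 * I * w)) * (y' w 0 + I * w * y w 0)) (𝓝[>] 0)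
      (𝓝 (-(f0 d ^ 2 + 1) / (2 * f0 d))) := by
  obtain ⟨h₀, h₀'⟩ := tendsto_jost_right_initial hyd hyd'
  obtain ⟨B, hB⟩ := exists_eventually_norm_le_of_tendsto_initial (x := 0)
    (continuous_ofReal.comp hq).continuousOn tendsto_ofReal_sq_nhdsGT_zero hy h₀ h₀'
  have hf0c : Continuous f0 := continuous_iff_continuousAt.2 fun t => (hf0 t).1.continuousAt
  obtain ⟨F, hF⟩ := isCompact_uIcc.exists_bound_of_continuousOn (hf0c.continuousOn (s := uIcc d 0))
  set J := fun w : ℝ => ∫ t in (0 : ℝ)..d, f0 t * y w t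
  have hJ : IsBoundedUnder (· ≤ ·) (𝓝[>] 0) (norm ∘ J) := by
    refine ⟨F * B * |d - 0|, eventually_map.2 <| hB.mono fun w hw =>
      intervalIntegral.norm_integral_le_of_norm_le_const fun t ht => ?_⟩
    have ht' : t ∈ uIcc d 0 := uIcc_comm 0 d ▸ uIoc_subset_uIcc ht
    rw [norm_mul]
    exact mul_le_mul (hF t ht') (hw t ht') (norm_nonneg _) ((norm_nonneg _).trans (hF t ht'))
  have hwJ : Tendsto (fun w : ℝ => I * w / 2 * J w) (𝓝[>] 0) (𝓝 0) :=
    Tendsto.zero_mul_isBoundedUnder_le (((by fun_prop : Continuous fun w : ℝ => I * w / 2).tendsto'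
      0 0 (by simp)).mono_left nhdsWithin_le_nhds) hJ
  -- the Wronskian of `y w` and `f0` at `0` and at `d` expresses `y' w 0` through `J w`
  have hformula : ∀ᶠ w : ℝ in 𝓝[>] 0, -((f0 d * y w d + y w 0) / 2) + I * w / 2 * J w =
      -(1 / (2 * I * w)) * (y' w 0 + I * w * y w 0) := by
    filter_upwards [hy, hyd, hyd', self_mem_nhdsWithin] with w hyw hydw hyd'w hw
    have hW := hyw.wronskian_sub_eq_integral hf0 0 d
    change _ = _ * J w at hW
    rw [hf00, hf00', hf0d, hyd'w, ← hydw] at hW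
    have : (w : ℂ) ≠ 0 := ofReal_ne_zero.2 (ne_of_gt hw)
    field_simp
    linear_combination -hW + (w : ℂ) ^ 2 * J w * I_sq
  have hlim := (((h₀.const_mul (f0 d)).add
    (tendsto_jost_right hq hy hyd hyd' hf0 hf0d hf0d_ne 0)).div_const 2).neg.add hwJ
  convert hlim.congr' hformula using 2
  rw [hf00]
  field_simp
  ring

end Jost

theorem generalized_eigenfunctions_at_zero_neumann_case_general
    (d : ℝ) (q : ℝ → ℝ) (hq : Continuous q)
    (y1 y1' y2 y2' : ℂ → ℝ → ℂ)
    (hy1 : ∀ ω : ℂ, ω ≠ 0 → ∀ x, HasDerivAt (y1 ω) (y1' ω x) x)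
    (hy1'' : ∀ ω : ℂ, ω ≠ 0 → ∀ x, HasDerivAt (y1' ω) (((q x : ℂ) - ω ^ 2) * y1 ω x) x)
    (hy1d : ∀ ω : ℂ, ω ≠ 0 → y1 ω d = Complex.exp (Complex.I * ω * d))
    (hy1d' : ∀ ω : ℂ, ω ≠ 0 → y1' ω d = Complex.I * ω * Complex.exp (Complex.I * ω * d))
    (hy2 : ∀ ω : ℂ, ω ≠ 0 → ∀ x, HasDerivAt (y2 ω) (y2' ω x) x)
    (hy2'' : ∀ ω : ℂ, ω ≠ 0 → ∀ x, HasDerivAt (y2' ω) (((q x : ℂ) - ω ^ 2) * y2 ω x) x)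
    (hy20 : ∀ ω : ℂ, ω ≠ 0 → y2 ω 0 = 1)
    (hy20' : ∀ ω : ℂ, ω ≠ 0 → y2' ω 0 = -Complex.I * ω)
    (a : ℂ → ℂ)
    (ha : ∀ ω : ℂ, ω ≠ 0 →
      a ω = -(1 / (2 * Complex.I * ω)) * (y1' ω 0 * y2 ω 0 - y1 ω 0 * y2' ω 0))
    (f0 f0' : ℝ → ℂ)
    (hf0 : ∀ x, HasDerivAt f0 (f0' x) x)
    (hf0' : ∀ x, HasDerivAt f0' ((q x : ℂ) * f0 x) x)
    (hf00 : f0 0 = 1) (hf00' : f0' 0 = 0)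
    (hf0d : f0' d = 0) :
    ∀ x : ℝ,
      Tendsto (fun ω : ℝ => y1 (ω : ℂ) x / ((Real.sqrt (2 * Real.pi) : ℂ) * a (ω : ℂ)))
        (𝓝[>] 0)
        (𝓝 (-(Real.sqrt (2 / Real.pi) : ℂ) * f0 x / (f0 d ^ 2 + 1))) ∧
      Tendsto (fun ω : ℝ => y2 (ω : ℂ) x / ((Real.sqrt (2 * Real.pi) : ℂ) * a (ω : ℂ)))
        (𝓝[>] 0)
        (𝓝 (-(Real.sqrt (2 / Real.pi) : ℂ) * f0 x * f0 d / (f0 d ^ 2 + 1))) := by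
  have hpos : ∀ᶠ ω : ℝ in 𝓝[>] 0, (ω : ℂ) ≠ 0 :=
    eventually_nhdsWithin_of_forall fun ω hω => ofReal_ne_zero.2 (ne_of_gt hω)
  have hqc : Continuous fun t => (q t : ℂ) := continuous_ofReal.comp hq
  have hf0s : SolvesLinearODE (fun t => q t) f0 f0' := fun t => ⟨hf0 t, hf0' t⟩
  have hy1s : ∀ᶠ ω : ℝ in 𝓝[>] 0, SolvesLinearODE (fun t => q t - (ω : ℂ) ^ 2) (y1 ω) (y1' ω) :=
    hpos.mono fun ω hω t => ⟨hy1 ω hω t, hy1'' ω hω t⟩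
  have hy2s : ∀ᶠ ω : ℝ in 𝓝[>] 0, SolvesLinearODE (fun t => q t - (ω : ℂ) ^ 2) (y2 ω) (y2' ω) :=
    hpos.mono fun ω hω t => ⟨hy2 ω hω t, hy2'' ω hω t⟩
  have hf0d_ne : f0 d ≠ 0 := fun h =>
    one_ne_zero (hf00 ▸ hf0s.eq_zero_of_eq_zero (t₀ := d) hqc.continuousOn h hf0d)
  obtain ⟨r, hr⟩ := conj_eq_iff_real.1 <| hf0s.conj_eq hqc (fun t => conj_ofReal _) (t₀ := 0)
    (by simp [hf00]) (by simp [hf00']) d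
  have hden : f0 d ^ 2 + 1 ≠ 0 := by
    rw [hr]
    exact_mod_cast (by positivity : r ^ 2 + 1 ≠ 0)
  have hy1d_ev := hpos.mono fun ω => hy1d ω
  have hy1d'_ev := hpos.mono fun ω => hy1d' ω
  have hlim_a : Tendsto (fun ω : ℝ => a ω) (𝓝[>] 0) (𝓝 (-(f0 d ^ 2 + 1) / (2 * f0 d))) :=
    (tendsto_transmission_coeff hq hy1s hy1d_ev hy1d'_ev hf0s hf00 hf00' hf0d hf0d_ne).congr' <|
      hpos.mono fun ω hω => by
        show _ = a ω
        rw [ha ω hω, hy20 ω hω, hy20' ω hω]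
        ring
  intro x
  constructor
  · have h := tendsto_div_sqrt_two_pi_mul
      (tendsto_jost_right hq hy1s hy1d_ev hy1d'_ev hf0s hf0d hf0d_ne x) hlim_a hf0d_ne hden
    rwa [mul_assoc, div_mul_cancel₀ _ hf0d_ne] at h
  · exact tendsto_div_sqrt_two_pi_mul (tendsto_jost_left hq hy2s (hpos.mono fun ω => hy20 ω)
      (hpos.mono fun ω => hy20' ω) hf0s hf00 hf00' x) hlim_a hf0d_ne hden

/-- If `f0'(d) = 0`, then for every `x`,
`lim_{ω → 0⁺} y1(x,ω)/(√(2π)·a(ω)) = −√(2/π)·f0(x)/(f0(d)² + 1)` and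
`lim_{ω → 0⁺} y2(x,ω)/(√(2π)·a(ω)) = −√(2/π)·f0(x)·f0(d)/(f0(d)² + 1)`,
where the limits are over real `ω > 0`. -/
theorem generalized_eigenfunctions_at_zero_neumann_case
    (d : ℝ) (hd : 0 < d) (q : ℝ → ℝ) (hq : Continuous q)
    (hqsupp : ∀ x : ℝ, x ∉ Set.Icc 0 d → q x = 0)
    (y1 y1' y2 y2' : ℂ → ℝ → ℂ)
    (hy1 : ∀ ω : ℂ, ω ≠ 0 → ∀ x, HasDerivAt (y1 ω) (y1' ω x) x)
    (hy1'' : ∀ ω : ℂ, ω ≠ 0 → ∀ x, HasDerivAt (y1' ω) (((q x : ℂ) - ω ^ 2) * y1 ω x) x)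
    (hy1d : ∀ ω : ℂ, ω ≠ 0 → y1 ω d = Complex.exp (Complex.I * ω * d))
    (hy1d' : ∀ ω : ℂ, ω ≠ 0 → y1' ω d = Complex.I * ω * Complex.exp (Complex.I * ω * d))
    (hy2 : ∀ ω : ℂ, ω ≠ 0 → ∀ x, HasDerivAt (y2 ω) (y2' ω x) x)
    (hy2'' : ∀ ω : ℂ, ω ≠ 0 → ∀ x, HasDerivAt (y2' ω) (((q x : ℂ) - ω ^ 2) * y2 ω x) x)
    (hy20 : ∀ ω : ℂ, ω ≠ 0 → y2 ω 0 = 1)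
    (hy20' : ∀ ω : ℂ, ω ≠ 0 → y2' ω 0 = -Complex.I * ω)
    (a : ℂ → ℂ)
    (ha : ∀ ω : ℂ, ω ≠ 0 →
      a ω = -(1 / (2 * Complex.I * ω)) * (y1' ω 0 * y2 ω 0 - y1 ω 0 * y2' ω 0))
    (f0 f0' : ℝ → ℂ)
    (hf0 : ∀ x, HasDerivAt f0 (f0' x) x)
    (hf0' : ∀ x, HasDerivAt f0' ((q x : ℂ) * f0 x) x)
    (hf00 : f0 0 = 1) (hf00' : f0' 0 = 0)
    (hf0d : f0' d = 0) :
    ∀ x : ℝ,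
      Tendsto (fun ω : ℝ => y1 (ω : ℂ) x / ((Real.sqrt (2 * Real.pi) : ℂ) * a (ω : ℂ)))
        (𝓝[>] 0)
        (𝓝 (-(Real.sqrt (2 / Real.pi) : ℂ) * f0 x / (f0 d ^ 2 + 1))) ∧
      Tendsto (fun ω : ℝ => y2 (ω : ℂ) x / ((Real.sqrt (2 * Real.pi) : ℂ) * a (ω : ℂ)))
        (𝓝[>] 0)
        (𝓝 (-(Real.sqrt (2 / Real.pi) : ℂ) * f0 x * f0 d / (f0 d ^ 2 + 1))) :=
  generalized_eigenfunctions_at_zero_neumann_case_general d q hq y1 y1' y2 y2' hy1 hy1'' hy1d hy1d'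
    hy2 hy2'' hy20 hy20' a ha f0 f0' hf0 hf0' hf00 hf00' hf0d
end

section
/- For the constant compactly supported potential and for all ω with ω² ≠ C, ω ≠ 0, the transmission coefficient equals a(ω) = −e^{iωd}·( cos(αd) + ((ω² + α²)/(2iωα))·sin(αd) ), where α is a square root of ω² − C. -/
/-!
On `[0, d]` the Jost solution `y₁` solves `y'' = -α² y`, as do `cos (α (x - d))` and
`sin (α (x - d))`. The Wronskian of two solutions is constant, so pairing `y₁` with each of these
and comparing the values at `d` (where `y₁` is known) and at `0` determines `y₁ 0` and `y₁' 0`.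
Since `a` is the Wronskian of `y₁` and `y₂` at `0`, where `y₂` is known, this gives the formula.
-/

open Complex Set

theorem hasDerivWithinAt_of_eqOn_add_integral {E : Type*} [NormedAddCommGroup E]
    [NormedSpace ℝ E] [CompleteSpace E] {f g F : ℝ → E} {s : Set ℝ} (hs : s.OrdConnected)
    {c x : ℝ} (hg : Continuous g) (hfg : EqOn f g s) (hc : c ∈ s) (hx : x ∈ s)
    (hF : ∀ y ∈ s, F y = F c + ∫ t in c..y, f t) :
    HasDerivWithinAt F (g x) s x := by
  have hF_eq : ∀ y ∈ s, F y = F c + ∫ t in c..y, g t := fun y hy => by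
    rw [hF y hy, intervalIntegral.integral_congr (hfg.mono (hs.uIcc_subset hc hy))]
  exact ((hg.integral_hasStrictDerivAt c x).hasDerivAt.const_add (F c)).hasDerivWithinAt.congr
    hF_eq (hF_eq x hx)

theorem wronskian_eq_of_hasDerivWithinAt {𝕜 : Type*} [RCLike 𝕜] {p u u' v v' : ℝ → 𝕜}
    {a b : ℝ} (hab : a ≤ b)
    (hu : ∀ x ∈ Icc a b, HasDerivWithinAt u (u' x) (Icc a b) x)
    (hu' : ∀ x ∈ Icc a b, HasDerivWithinAt u' (p x * u x) (Icc a b) x)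
    (hv : ∀ x ∈ Icc a b, HasDerivWithinAt v (v' x) (Icc a b) x)
    (hv' : ∀ x ∈ Icc a b, HasDerivWithinAt v' (p x * v x) (Icc a b) x) :
    u' b * v b - u b * v' b = u' a * v a - u a * v' a := by
  have hW : ∀ x ∈ Icc a b, HasDerivWithinAt (fun x => u' x * v x - u x * v' x) 0 (Icc a b) x :=
    fun x hx => (((hu' x hx).mul (hv x hx)).sub ((hu x hx).mul (hv' x hx))).congr_deriv
      (by ring)
  simpa only [zero_mul, norm_le_zero_iff, sub_eq_zero] using
    norm_image_sub_le_of_norm_deriv_le_segment' hW (fun _ _ => norm_zero.le) b ⟨hab, le_rfl⟩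

theorem hasDerivAt_cos_mul_sub (α : ℂ) (c x : ℝ) :
    HasDerivAt (fun x : ℝ => cos (α * (x - c))) (-α * sin (α * (x - c))) x := by
  have := ((((hasDerivAt_id (x : ℂ)).sub_const (c : ℂ)).const_mul α).ccos).comp_ofReal
  exact this.congr_deriv (by simp only [id, mul_one]; ring)

theorem hasDerivAt_sin_mul_sub (α : ℂ) (c x : ℝ) :
    HasDerivAt (fun x : ℝ => sin (α * (x - c))) (α * cos (α * (x - c))) x := by
  have := ((((hasDerivAt_id (x : ℂ)).sub_const (c : ℂ)).const_mul α).csin).comp_ofReal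
  exact this.congr_deriv (by simp only [id, mul_one]; ring)

theorem values_at_left_of_hasDerivWithinAt_neg_sq_mul (α : ℂ) {u u' : ℝ → ℂ} {a b : ℝ}
    (hab : a ≤ b) (hu : ∀ x ∈ Icc a b, HasDerivWithinAt u (u' x) (Icc a b) x)
    (hu' : ∀ x ∈ Icc a b, HasDerivWithinAt u' (-α ^ 2 * u x) (Icc a b) x) :
    u' a = u' b * cos (α * (b - a)) + α * u b * sin (α * (b - a)) ∧
      α * u a = α * u b * cos (α * (b - a)) - u' b * sin (α * (b - a)) := by
  have wronskian_with {v v' : ℝ → ℂ} (hv : ∀ x, HasDerivAt v (v' x) x)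
      (hv' : ∀ x, HasDerivAt v' (-α ^ 2 * v x) x) :=
    wronskian_eq_of_hasDerivWithinAt (p := fun _ => -α ^ 2) hab hu hu'
      (fun x _ => (hv x).hasDerivWithinAt) (fun x _ => (hv' x).hasDerivWithinAt)
  have hcos := wronskian_with (hasDerivAt_cos_mul_sub α b) fun x =>
    ((hasDerivAt_sin_mul_sub α b x).const_mul (-α)).congr_deriv (by ring)
  have hsin := wronskian_with (hasDerivAt_sin_mul_sub α b) fun x =>
    ((hasDerivAt_cos_mul_sub α b x).const_mul α).congr_deriv (by ring)
  rw [show α * ((a : ℂ) - b) = -(α * (b - a)) by ring] at hcos hsin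
  simp only [sub_self, mul_zero, cos_zero, sin_zero, cos_neg, sin_neg] at hcos hsin
  have pyth := sin_sq_add_cos_sq (α * (b - a))
  constructor
  · linear_combination (-cos (α * (b - a))) * hcos + sin (α * (b - a)) * hsin - u' a * pyth
  · linear_combination sin (α * (b - a)) * hcos + cos (α * (b - a)) * hsin - α * u a * pyth

theorem transmission_coefficient_constant_potential_general
    (d : ℝ) (hd : 0 < d) (C : ℝ)
    (ω : ℂ) (hω : ω ≠ 0) (hωC : ω ^ 2 ≠ (C : ℂ))
    (α : ℂ) (hα : α ^ 2 = ω ^ 2 - C)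
    (y1 y1' y2 y2' : ℝ → ℂ)
    (hy1 : ∀ x, HasDerivAt y1 (y1' x) x)
    (hy1' : ∀ x : ℝ, y1' x = y1' d +
      ∫ t in d..x, (((if t ∈ Set.Icc 0 d then C else 0 : ℝ) : ℂ) - ω ^ 2) * y1 t)
    (hy1d : y1 d = Complex.exp (Complex.I * ω * d))
    (hy1d' : y1' d = Complex.I * ω * Complex.exp (Complex.I * ω * d))
    (hy20 : y2 0 = 1) (hy20' : y2' 0 = -Complex.I * ω)
    (a : ℂ)
    (ha : a = -(1 / (2 * Complex.I * ω)) * (y1' 0 * y2 0 - y1 0 * y2' 0)) :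
    a = -Complex.exp (Complex.I * ω * d) *
        (Complex.cos (α * d) +
          ((ω ^ 2 + α ^ 2) / (2 * Complex.I * ω * α)) * Complex.sin (α * d)) := by
  have hy1_cont : Continuous y1 := continuous_iff_continuousAt.2 fun x => (hy1 x).continuousAt
  have hy1_deriv : ∀ x ∈ Icc 0 d, HasDerivWithinAt y1' (-α ^ 2 * y1 x) (Icc 0 d) x :=
    fun x hx => hasDerivWithinAt_of_eqOn_add_integral (g := fun t => -α ^ 2 * y1 t)
      ordConnected_Icc (continuous_const.mul hy1_cont)
      (fun t ht => by simp only [if_pos ht, hα]; ring) (right_mem_Icc.2 hd.le) hx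
      fun y _ => hy1' y
  obtain ⟨hy1'_zero, hy1_zero⟩ := values_at_left_of_hasDerivWithinAt_neg_sq_mul α hd.le
    (fun x _ => (hy1 x).hasDerivWithinAt) hy1_deriv
  simp only [hy1d, hy1d', ofReal_zero, sub_zero] at hy1'_zero hy1_zero
  have hα0 : α ≠ 0 := by
    rintro rfl
    exact hωC (by linear_combination -hα)
  rw [ha, hy20, hy20']
  generalize cos (α * d) = c, sin (α * d) = s at hy1'_zero hy1_zero ⊢
  field_simp
  linear_combination (-α) * hy1'_zero - I * ω * hy1_zero + ω ^ 2 * exp (I * ω * d) * s * I_sq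

/-- For the constant potential `q = C` on `[0,d]` (zero outside), for `ω ≠ 0`
with `ω² ≠ C`, the transmission coefficient equals
`a(ω) = −e^{iωd}(cos(αd) + ((ω² + α²)/(2iωα))sin(αd))`, where `α² = ω² − C`.
Here `a(ω)` is given by the Wronskian of the Jost solutions (taken at `x = 0`). -/
theorem transmission_coefficient_constant_potential
    (d : ℝ) (hd : 0 < d) (C : ℝ)
    (ω : ℂ) (hω : ω ≠ 0) (hωC : ω ^ 2 ≠ (C : ℂ))
    (α : ℂ) (hα : α ^ 2 = ω ^ 2 - C)
    (y1 y1' y2 y2' : ℝ → ℂ)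
    (hy1 : ∀ x, HasDerivAt y1 (y1' x) x)
    (hy1' : ∀ x : ℝ, y1' x = y1' d +
      ∫ t in d..x, (((if t ∈ Set.Icc 0 d then C else 0 : ℝ) : ℂ) - ω ^ 2) * y1 t)
    (hy1d : y1 d = Complex.exp (Complex.I * ω * d))
    (hy1d' : y1' d = Complex.I * ω * Complex.exp (Complex.I * ω * d))
    (hy2 : ∀ x, HasDerivAt y2 (y2' x) x)
    (hy2' : ∀ x : ℝ, y2' x = y2' 0 +
      ∫ t in (0 : ℝ)..x, (((if t ∈ Set.Icc 0 d then C else 0 : ℝ) : ℂ) - ω ^ 2) * y2 t)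
    (hy20 : y2 0 = 1) (hy20' : y2' 0 = -Complex.I * ω)
    (a : ℂ)
    (ha : a = -(1 / (2 * Complex.I * ω)) * (y1' 0 * y2 0 - y1 0 * y2' 0)) :
    a = -Complex.exp (Complex.I * ω * d) *
        (Complex.cos (α * d) +
          ((ω ^ 2 + α ^ 2) / (2 * Complex.I * ω * α)) * Complex.sin (α * d)) :=
  transmission_coefficient_constant_potential_general d hd C ω hω hωC α hα y1 y1' y2 y2' hy1 hy1'
    hy1d hy1d' hy20 hy20' a ha
end

section
/- For the constant compactly supported potential and 0 ≤ y < x ≤ d, ω ≠ 0, ω² ≠ C, the product of the Jost solutions satisfies y1(x,ω)·y2(y,ω) = e^{iωd}·( cos(α(d−x+y)) − (iω/α)·sin(α(d−x+y)) − (C/α²)·sin(α(d−x))·sin(αy) ), where α is a square root of ω² − C; consequently the Green function G(x,y;ω²) = y1(x,ω)y2(y,ω)/(2iω·a(ω)) equals e^{iωd}/(2iω·a(ω)) times that expression. -/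
/-! On the well `[0, d]` the potential is the constant `C`, so both Jost solutions solve
`y'' = -α² y` there and are determined by their Cauchy data at any point `c` of the well:
`y x = y c * cos (α (x - c)) + y' c / α * sin (α (x - c))`. With the data at `d` and at `0`
this gives `y1 x = e^{iωd} (cos (α (d - x)) - (iω/α) sin (α (d - x)))` and
`y2 y = cos (α y) - (iω/α) sin (α y)`.
Multiplying out with the addition formulas leaves the extra term
`(1 + (iω/α)²) sin (α (d - x)) sin (α y)`, and `1 + (iω/α)² = -C/α²` since `α² = ω² - C`. -/

open Complex Set intervalIntegral

section Primitive

variable {a b c : ℝ} {G g : ℝ → ℂ}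

theorem continuousOn_of_eq_add_integral (hG : Continuous G)
    (hg : ∀ x ∈ Icc a b, g x = g c + ∫ t in c..x, G t) : ContinuousOn g (Icc a b) := by
  refine ContinuousOn.congr ?_ hg
  exact (continuous_const.add (continuous_iff_continuousAt.2 fun x =>
    (hG.integral_hasStrictDerivAt c x).hasDerivAt.continuousAt)).continuousOn

theorem hasDerivWithinAt_Ici_of_eq_add_integral (hG : Continuous G)
    (hg : ∀ x ∈ Icc a b, g x = g c + ∫ t in c..x, G t) :
    ∀ x ∈ Ico a b, HasDerivWithinAt g (G x) (Ici x) x := by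
  intro x hx
  have hP : HasDerivAt (fun u => g c + ∫ t in c..u, G t) (G x) x :=
    (hG.integral_hasStrictDerivAt c x).hasDerivAt.const_add _
  refine hP.hasDerivWithinAt.congr_of_eventuallyEq ?_ (hg x (Ico_subset_Icc_self hx))
  filter_upwards [Ico_mem_nhdsGE hx.2] with t ht
  exact hg t ⟨hx.1.trans ht.1, ht.2.le⟩

end Primitive

theorem eq_cos_add_sin_of_eq_add_integral {a b c : ℝ} {α : ℂ} (hα : α ≠ 0) {f f' : ℝ → ℂ}
    (hf : ∀ x, HasDerivAt f (f' x) x)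
    (hf' : ∀ x ∈ Icc a b, f' x = f' c + ∫ t in c..x, -α ^ 2 * f t) (hc : c ∈ Icc a b) :
    ∀ x ∈ Icc a b, f x = f c * cos (α * (x - c)) + f' c / α * sin (α * (x - c)) := by
  intro x hx
  set co : ℝ → ℂ := fun t => cos (α * (t - c))
  set si : ℝ → ℂ := fun t => sin (α * (t - c))
  have hlin : ∀ t : ℝ, HasDerivAt (fun s : ℝ => α * ((s : ℂ) - c)) α t := by
    intro t
    simpa using ((hasDerivAt_id t).ofReal_comp.sub_const (c : ℂ)).const_mul α
  have hco : ∀ t : ℝ, HasDerivAt co (-sin (α * (t - c)) * α) t :=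
    fun t => (hasDerivAt_cos _).comp t (hlin t)
  have hsi : ∀ t : ℝ, HasDerivAt si (cos (α * (t - c)) * α) t :=
    fun t => (hasDerivAt_sin _).comp t (hlin t)
  have hfc : Continuous f := continuous_iff_continuousAt.2 fun t => (hf t).continuousAt
  have hf'c := continuousOn_of_eq_add_integral (by fun_prop) hf'
  have hf'' := hasDerivWithinAt_Ici_of_eq_add_integral (by fun_prop) hf'
  have hcoc : Continuous co := continuous_iff_continuousAt.2 fun t => (hco t).continuousAt
  have hsic : Continuous si := continuous_iff_continuousAt.2 fun t => (hsi t).continuousAt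
  have hconst : ∀ W : ℝ → ℂ, ContinuousOn W (Icc a b) →
      (∀ t ∈ Ico a b, HasDerivWithinAt W 0 (Ici t) t) → W x = W c := fun W hW hW' => by
    rw [constant_of_has_deriv_right_zero hW hW' x hx, constant_of_has_deriv_right_zero hW hW' c hc]
  -- The two conserved quantities are, up to sign, the Wronskians of `f` with `si / α` and `co`.
  have hU := hconst (fun t => f t * co t - f' t * si t / α)
    ((hfc.mul hcoc).continuousOn.sub ((hf'c.mul hsic.continuousOn).div_const α))
    fun t ht => by
      refine (((hf t).mul (hco t)).hasDerivWithinAt.sub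
        (((hf'' t ht).mul (hsi t).hasDerivWithinAt).div_const α)).congr_deriv ?_
      field_simp
      ring
  have hV := hconst (fun t => f t * α * si t + f' t * co t)
    (((hfc.mul continuous_const).mul hsic).continuousOn.add (hf'c.mul hcoc.continuousOn))
    fun t ht => by
      refine ((((hf t).mul_const α).mul (hsi t)).hasDerivWithinAt.add
        ((hf'' t ht).mul (hco t).hasDerivWithinAt)).congr_deriv ?_
      ring
  simp only [co, si, sub_self, mul_zero, cos_zero, sin_zero, mul_one, zero_div, sub_zero,
    zero_add] at hU hV
  field_simp at hU ⊢
  linear_combination cos (α * (x - c)) * hU + sin (α * (x - c)) * hV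
    - α * f x * sin_sq_add_cos_sq (α * (x - c))

theorem eq_add_integral_neg_sq_mul_of_step_potential {d C : ℝ} {ω α : ℂ}
    (hα : α ^ 2 = ω ^ 2 - C) {c : ℝ} (hc : c ∈ Icc 0 d) {g g' : ℝ → ℂ}
    (hg' : ∀ x : ℝ, g' x = g' c +
      ∫ t in c..x, (((if t ∈ Set.Icc 0 d then C else 0 : ℝ) : ℂ) - ω ^ 2) * g t) :
    ∀ x ∈ Icc 0 d, g' x = g' c + ∫ t in c..x, -α ^ 2 * g t := by
  intro x hx
  rw [hg' x]
  congr 1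
  refine integral_congr fun t ht => ?_
  rw [if_pos (uIcc_subset_Icc hc hx ht)]
  linear_combination g t * hα

theorem cos_sub_mul_sin_mul_cos_sub_mul_sin (u v r : ℂ) :
    (cos u - r * sin u) * (cos v - r * sin v) =
      cos (u + v) - r * sin (u + v) + (1 + r ^ 2) * sin u * sin v := by
  rw [cos_add, sin_add]
  ring

theorem green_function_constant_potential_general
    (d : ℝ) (C : ℝ)
    (ω : ℂ) (hωC : ω ^ 2 ≠ (C : ℂ))
    (α : ℂ) (hα : α ^ 2 = ω ^ 2 - C)
    (y1 y1' y2 y2' : ℝ → ℂ)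
    (hy1 : ∀ x, HasDerivAt y1 (y1' x) x)
    (hy1' : ∀ x : ℝ, y1' x = y1' d +
      ∫ t in d..x, (((if t ∈ Set.Icc 0 d then C else 0 : ℝ) : ℂ) - ω ^ 2) * y1 t)
    (hy1d : y1 d = Complex.exp (Complex.I * ω * d))
    (hy1d' : y1' d = Complex.I * ω * Complex.exp (Complex.I * ω * d))
    (hy2 : ∀ x, HasDerivAt y2 (y2' x) x)
    (hy2' : ∀ x : ℝ, y2' x = y2' 0 +
      ∫ t in (0 : ℝ)..x, (((if t ∈ Set.Icc 0 d then C else 0 : ℝ) : ℂ) - ω ^ 2) * y2 t)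
    (hy20 : y2 0 = 1) (hy20' : y2' 0 = -Complex.I * ω)
    (a : ℂ) :
    ∀ x y : ℝ, 0 ≤ y → y < x → x ≤ d →
      y1 x * y2 y = Complex.exp (Complex.I * ω * d) *
          (Complex.cos (α * ((d : ℂ) - x + y)) -
            (Complex.I * ω / α) * Complex.sin (α * ((d : ℂ) - x + y)) -
            ((C : ℂ) / α ^ 2) * Complex.sin (α * ((d : ℂ) - x)) * Complex.sin (α * y)) ∧
      y1 x * y2 y / (2 * Complex.I * ω * a) =
        Complex.exp (Complex.I * ω * d) / (2 * Complex.I * ω * a) *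
          (Complex.cos (α * ((d : ℂ) - x + y)) -
            (Complex.I * ω / α) * Complex.sin (α * ((d : ℂ) - x + y)) -
            ((C : ℂ) / α ^ 2) * Complex.sin (α * ((d : ℂ) - x)) * Complex.sin (α * y)) := by
  intro x y hy hyx hxd
  have hα0 : α ≠ 0 := by
    rintro rfl
    exact hωC (by linear_combination -hα)
  have hd_mem : d ∈ Icc 0 d := right_mem_Icc.2 (by linarith)
  have h0_mem : (0 : ℝ) ∈ Icc 0 d := left_mem_Icc.2 (by linarith)
  have hy1x : y1 x = exp (I * ω * d) *
      (cos (α * (d - x)) - I * ω / α * sin (α * (d - x))) := by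
    rw [eq_cos_add_sin_of_eq_add_integral hα0 hy1
      (eq_add_integral_neg_sq_mul_of_step_potential hα hd_mem hy1') hd_mem x ⟨by linarith, hxd⟩,
      hy1d, hy1d', ← neg_sub (d : ℂ), mul_neg, cos_neg, sin_neg]
    ring
  have hy2y : y2 y = cos (α * y) - I * ω / α * sin (α * y) := by
    rw [eq_cos_add_sin_of_eq_add_integral hα0 hy2
      (eq_add_integral_neg_sq_mul_of_step_potential hα h0_mem hy2') h0_mem y ⟨hy, by linarith⟩,
      hy20, hy20', ofReal_zero, sub_zero]
    ring
  have hr : 1 + (I * ω / α) ^ 2 = -(C / α ^ 2) := by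
    field_simp
    linear_combination hα + ω ^ 2 * I_sq
  have hprod : y1 x * y2 y = exp (I * ω * d) *
      (cos (α * (d - x + y)) - I * ω / α * sin (α * (d - x + y)) -
        C / α ^ 2 * sin (α * (d - x)) * sin (α * y)) := by
    rw [hy1x, hy2y, mul_assoc, cos_sub_mul_sin_mul_cos_sub_mul_sin, ← mul_add, hr]
    ring
  exact ⟨hprod, by rw [hprod, mul_div_right_comm]⟩

/-- For the constant potential `q = C` on `[0,d]` (zero outside) and
`0 ≤ y < x ≤ d`, `ω ≠ 0`, `ω² ≠ C`, the product of the Jost solutions satisfies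
`y1(x,ω)·y2(y,ω) = e^{iωd}( cos(α(d−x+y)) − (iω/α)sin(α(d−x+y)) − (C/α²)sin(α(d−x))sin(αy) )`
with `α² = ω² − C`; consequently the Green function `G(x,y;ω²) = y1(x,ω)y2(y,ω)/(2iω·a(ω))`
equals `e^{iωd}/(2iω·a(ω))` times that expression. -/
theorem green_function_constant_potential
    (d : ℝ) (hd : 0 < d) (C : ℝ)
    (ω : ℂ) (hω : ω ≠ 0) (hωC : ω ^ 2 ≠ (C : ℂ))
    (α : ℂ) (hα : α ^ 2 = ω ^ 2 - C)
    (y1 y1' y2 y2' : ℝ → ℂ)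
    (hy1 : ∀ x, HasDerivAt y1 (y1' x) x)
    (hy1' : ∀ x : ℝ, y1' x = y1' d +
      ∫ t in d..x, (((if t ∈ Set.Icc 0 d then C else 0 : ℝ) : ℂ) - ω ^ 2) * y1 t)
    (hy1d : y1 d = Complex.exp (Complex.I * ω * d))
    (hy1d' : y1' d = Complex.I * ω * Complex.exp (Complex.I * ω * d))
    (hy2 : ∀ x, HasDerivAt y2 (y2' x) x)
    (hy2' : ∀ x : ℝ, y2' x = y2' 0 +
      ∫ t in (0 : ℝ)..x, (((if t ∈ Set.Icc 0 d then C else 0 : ℝ) : ℂ) - ω ^ 2) * y2 t)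
    (hy20 : y2 0 = 1) (hy20' : y2' 0 = -Complex.I * ω)
    (a : ℂ)
    (ha : a = -(1 / (2 * Complex.I * ω)) * (y1' 0 * y2 0 - y1 0 * y2' 0)) :
    ∀ x y : ℝ, 0 ≤ y → y < x → x ≤ d →
      y1 x * y2 y = Complex.exp (Complex.I * ω * d) *
          (Complex.cos (α * ((d : ℂ) - x + y)) -
            (Complex.I * ω / α) * Complex.sin (α * ((d : ℂ) - x + y)) -
            ((C : ℂ) / α ^ 2) * Complex.sin (α * ((d : ℂ) - x)) * Complex.sin (α * y)) ∧
      y1 x * y2 y / (2 * Complex.I * ω * a) =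
        Complex.exp (Complex.I * ω * d) / (2 * Complex.I * ω * a) *
          (Complex.cos (α * ((d : ℂ) - x + y)) -
            (Complex.I * ω / α) * Complex.sin (α * ((d : ℂ) - x + y)) -
            ((C : ℂ) / α ^ 2) * Complex.sin (α * ((d : ℂ) - x)) * Complex.sin (α * y)) :=
  green_function_constant_potential_general d C ω hωC α hα y1 y1' y2 y2' hy1 hy1' hy1d hy1d' hy2
    hy2' hy20 hy20' a
end
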